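/- arXiv:1612.09476 — 4 statements merged into one kernel-verified Lean document; each statement's English description precedes it below -/
import Mathlib

section
/- Let λ ∈ 𝒫 and let λ^♯ ∈ 𝒫′ be its transpose, characterized by Y′₊^{λ^♯} = {(l,k) : (k,l) ∈ Y₊^λ}. If T ∈ ℬ₋(λ), then the function T′ : Y′₊^{λ^♯} → {1,…,M+N} defined by T′(k,l) := M+N+1 − T(−l,−k) is a well-defined element of ℬ′₊(λ^♯); moreover T ↦ T′ is a bijection ℬ₋(λ) → ℬ′₊(λ^♯). -/
open scoped Classical

namespace QAS

/-- `λ ∈ 𝒫`: coordinates are 1-based, `λ_j = 0` outside `1,…,M+N`. -/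
def inP (M N : ℕ) (lam : ℕ → ℕ) : Prop :=
  lam 0 = 0 ∧ (∀ j, M + N < j → lam j = 0) ∧
  (∀ k l, 1 ≤ k → k ≤ l → l ≤ M → lam l ≤ lam k) ∧
  (∀ k l, M + 1 ≤ k → k ≤ l → l ≤ M + N → lam l ≤ lam k) ∧
  (∀ j, 1 ≤ j → j ≤ N → 0 < lam (M + j) → j ≤ lam M)

/-- the Young diagram `Y₊^λ ⊂ ℤ_{>0}²` (in `ℕ × ℕ`). -/
def Yp (M N : ℕ) (lam : ℕ → ℕ) : Set (ℕ × ℕ) :=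
  {p | 1 ≤ p.1 ∧ 1 ≤ p.2 ∧
    ((p.1 ≤ M ∧ p.2 ≤ lam p.1) ∨ (M < p.1 ∧ p.2 ≤ N ∧ p.1 ≤ M + lam (M + p.2)))}

/-- `Y₊^λ` as a subset of `ℤ × ℤ`. -/
def YpZ (M N : ℕ) (lam : ℕ → ℕ) : Set (ℤ × ℤ) :=
  {p | ∃ k l : ℕ, (k, l) ∈ Yp M N lam ∧ p = ((k : ℤ), (l : ℤ))}

/-- `Y₋^λ = -Y₊^λ ⊂ ℤ_{<0}²`. -/
def YnZ (M N : ℕ) (lam : ℕ → ℕ) : Set (ℤ × ℤ) :=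
  {p | ∃ k l : ℕ, (k, l) ∈ Yp M N lam ∧ p = (-(k : ℤ), -(l : ℤ))}

/-- tableau conditions on a domain `Y ⊂ ℤ²` with strictness threshold `MM` and
entries in `{1,…,kap}`; tableaux are encoded as functions `ℤ × ℤ → ℕ` vanishing
off `Y`. -/
def isTab (MM kap : ℕ) (Y : Set (ℤ × ℤ)) (T : ℤ × ℤ → ℕ) : Prop :=
  (∀ p, p ∉ Y → T p = 0) ∧
  (∀ p ∈ Y, 1 ≤ T p ∧ T p ≤ kap) ∧
  (∀ p ∈ Y, ∀ p' ∈ Y, p.1 ≤ p'.1 → p.2 ≤ p'.2 → T p ≤ T p') ∧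
  (∀ p ∈ Y, (p.1 + 1, p.2) ∈ Y → T p ≤ MM → T p < T (p.1 + 1, p.2)) ∧
  (∀ p ∈ Y, (p.1, p.2 + 1) ∈ Y → MM < T p → T p < T (p.1, p.2 + 1))

/-- `ℬ₋(λ)` for `𝔤𝔩(M|N)`. -/
def Bneg (M N : ℕ) (lam : ℕ → ℕ) : Set (ℤ × ℤ → ℕ) :=
  {T | isTab M (M + N) (YnZ M N lam) T}

/-- `ℬ′₊(μ)` for `𝔤𝔩(N|M)` (primed objects: the roles of `M` and `N` interchanged). -/
def BposP (M N : ℕ) (mu : ℕ → ℕ) : Set (ℤ × ℤ → ℕ) :=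
  {T | isTab N (M + N) (YpZ N M mu) T}

section Aux

variable {M N : ℕ} {lam mu : ℕ → ℕ}

lemma mem_swap (hY : ∀ k l : ℕ, (k, l) ∈ Yp N M mu ↔ (l, k) ∈ Yp M N lam)
    (p : ℤ × ℤ) : p ∈ YpZ N M mu ↔ (-p.2, -p.1) ∈ YnZ M N lam := by
  constructor
  · rintro ⟨k, l, hkl, rfl⟩
    exact ⟨l, k, (hY k l).mp hkl, by simp⟩
  · rintro ⟨k, l, hkl, h⟩
    have h1 : p.1 = (l : ℤ) := by
      have := congrArg Prod.snd h; simp at this; omega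
    have h2 : p.2 = (k : ℤ) := by
      have := congrArg Prod.fst h; simp at this; omega
    exact ⟨l, k, (hY l k).mpr hkl, Prod.ext h1 h2⟩

lemma mem_swap' (hY : ∀ k l : ℕ, (k, l) ∈ Yp N M mu ↔ (l, k) ∈ Yp M N lam)
    (q : ℤ × ℤ) : q ∈ YnZ M N lam ↔ (-q.2, -q.1) ∈ YpZ N M mu := by
  have := mem_swap hY (-q.2, -q.1)
  simpa using this.symm

/-- The forward map sends `Bneg` to `BposP`. -/
lemma forward_mem (hY : ∀ k l : ℕ, (k, l) ∈ Yp N M mu ↔ (l, k) ∈ Yp M N lam)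
    {T : ℤ × ℤ → ℕ} (hT : T ∈ Bneg M N lam) :
    (fun p : ℤ × ℤ => if p ∈ YpZ N M mu then M + N + 1 - T (-p.2, -p.1) else 0)
      ∈ BposP M N mu := by
  obtain ⟨h0, h1, h2, h3, h4⟩ := hT
  refine ⟨?_, ?_, ?_, ?_, ?_⟩
  · intro p hp; simp [hp]
  · intro p hp
    have hq : (-p.2, -p.1) ∈ YnZ M N lam := (mem_swap hY p).mp hp
    have := h1 _ hq
    simp only [hp, if_pos]
    omega
  · intro p hp p' hp' hle1 hle2
    have hq : (-p.2, -p.1) ∈ YnZ M N lam := (mem_swap hY p).mp hp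
    have hq' : (-p'.2, -p'.1) ∈ YnZ M N lam := (mem_swap hY p').mp hp'
    have hm := h2 _ hq' _ hq (by simp; omega) (by simp; omega)
    have b1 := h1 _ hq
    have b2 := h1 _ hq'
    simp only [hp, hp', if_pos]
    omega
  · intro p hp hp1 hle
    have hq : (-p.2, -p.1) ∈ YnZ M N lam := (mem_swap hY p).mp hp
    have hq1 : (-p.2, -p.1 - 1) ∈ YnZ M N lam := by
      have e : ((-p.2, -p.1 - 1) : ℤ × ℤ) = (-((p.1 + 1 : ℤ), p.2).2, -((p.1 + 1 : ℤ), p.2).1) := by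
        simp [Prod.ext_iff]; ring
      rw [e]; exact (mem_swap hY _).mp hp1
    have key : T (-p.2, -p.1 - 1) < T (-p.2, -p.1) := by
      by_cases hc : T (-p.2, -p.1 - 1) ≤ M
      · -- since the value at p is ≤ N, T(-p.2,-p.1) ≥ M+1
        have b1 := h1 _ hq
        simp only [hp, if_pos] at hle
        omega
      · have := h4 (-p.2, -p.1 - 1) hq1 (by simpa using hq) (by omega)
        simpa using this
    have b1 := h1 _ hq
    have b2 := h1 _ hq1
    simp only [hp, hp1, if_pos, neg_add]
    show M + N + 1 - T (-p.2, -p.1) < M + N + 1 - T (-p.2, -p.1 + -1)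
    have e : (-p.1 + -1 : ℤ) = -p.1 - 1 := by ring
    rw [e]
    omega
  · intro p hp hp1 hgt
    have hq : (-p.2, -p.1) ∈ YnZ M N lam := (mem_swap hY p).mp hp
    have hq1 : (-p.2 - 1, -p.1) ∈ YnZ M N lam := by
      have e : ((-p.2 - 1, -p.1) : ℤ × ℤ) = (-((p.1 : ℤ), p.2 + 1).2, -((p.1 : ℤ), p.2 + 1).1) := by
        simp [Prod.ext_iff]; ring
      rw [e]; exact (mem_swap hY _).mp hp1
    have key : T (-p.2 - 1, -p.1) < T (-p.2, -p.1) := by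
      by_cases hc : T (-p.2 - 1, -p.1) ≤ M
      · have := h3 (-p.2 - 1, -p.1) hq1 (by simpa using hq) hc
        simp only at this
        have e : (-p.2 - 1 + 1 : ℤ) = -p.2 := by ring
        rw [e] at this
        omega
      · have hTle : T (-p.2, -p.1) ≤ M := by
          have b1 := h1 _ hq
          simp only [hp, if_pos] at hgt
          omega
        have := h2 _ hq1 _ hq (by dsimp only; omega) (by dsimp only; omega)
        omega
    have b1 := h1 _ hq
    have b2 := h1 _ hq1
    simp only [hp, hp1, if_pos, neg_add]
    have e : (-(p.2) + -1 : ℤ) = -p.2 - 1 := by ring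
    rw [e]
    omega

/-- The backward map sends `BposP` to `Bneg`. -/
lemma backward_mem (hY : ∀ k l : ℕ, (k, l) ∈ Yp N M mu ↔ (l, k) ∈ Yp M N lam)
    {S : ℤ × ℤ → ℕ} (hS : S ∈ BposP M N mu) :
    (fun q : ℤ × ℤ => if q ∈ YnZ M N lam then M + N + 1 - S (-q.2, -q.1) else 0)
      ∈ Bneg M N lam := by
  obtain ⟨h0, h1, h2, h3, h4⟩ := hS
  refine ⟨?_, ?_, ?_, ?_, ?_⟩
  · intro q hq; simp [hq]
  · intro q hq
    have hp : (-q.2, -q.1) ∈ YpZ N M mu := (mem_swap' hY q).mp hq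
    have := h1 _ hp
    simp only [hq, if_pos]
    omega
  · intro q hq q' hq' hle1 hle2
    have hp : (-q.2, -q.1) ∈ YpZ N M mu := (mem_swap' hY q).mp hq
    have hp' : (-q'.2, -q'.1) ∈ YpZ N M mu := (mem_swap' hY q').mp hq'
    have hm := h2 _ hp' _ hp (by simp; omega) (by simp; omega)
    have b1 := h1 _ hp
    have b2 := h1 _ hp'
    simp only [hq, hq', if_pos]
    omega
  · intro q hq hq1 hle
    have hp : (-q.2, -q.1) ∈ YpZ N M mu := (mem_swap' hY q).mp hq
    have hp1 : (-q.2, -q.1 - 1) ∈ YpZ N M mu := by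
      have e : ((-q.2, -q.1 - 1) : ℤ × ℤ) = (-((q.1 + 1 : ℤ), q.2).2, -((q.1 + 1 : ℤ), q.2).1) := by
        simp [Prod.ext_iff]; ring
      rw [e]; exact (mem_swap' hY _).mp hq1
    have key : S (-q.2, -q.1 - 1) < S (-q.2, -q.1) := by
      by_cases hc : S (-q.2, -q.1 - 1) ≤ N
      · have b1 := h1 _ hp
        simp only [hq, if_pos] at hle
        omega
      · have := h4 (-q.2, -q.1 - 1) hp1 (by simpa using hp) (by omega)
        simpa using this
    have b1 := h1 _ hp
    have b2 := h1 _ hp1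
    simp only [hq, hq1, if_pos, neg_add]
    have e : (-(q.1) + -1 : ℤ) = -q.1 - 1 := by ring
    rw [e]
    omega
  · intro q hq hq1 hgt
    have hp : (-q.2, -q.1) ∈ YpZ N M mu := (mem_swap' hY q).mp hq
    have hp1 : (-q.2 - 1, -q.1) ∈ YpZ N M mu := by
      have e : ((-q.2 - 1, -q.1) : ℤ × ℤ) = (-((q.1 : ℤ), q.2 + 1).2, -((q.1 : ℤ), q.2 + 1).1) := by
        simp [Prod.ext_iff]; ring
      rw [e]; exact (mem_swap' hY _).mp hq1
    have key : S (-q.2 - 1, -q.1) < S (-q.2, -q.1) := by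
      by_cases hc : S (-q.2 - 1, -q.1) ≤ N
      · have hSle : S (-q.2, -q.1) ≤ N := by
          have b1 := h1 _ hp
          simp only [hq, if_pos] at hgt
          omega
        have := h3 (-q.2 - 1, -q.1) hp1 (by simpa using hp) hc
        simp only at this
        have e : (-q.2 - 1 + 1 : ℤ) = -q.2 := by ring
        rw [e] at this
        omega
      · have hSle : S (-q.2, -q.1) ≤ N := by
          have b1 := h1 _ hp
          simp only [hq, if_pos] at hgt
          omega
        have := h2 _ hp1 _ hp (by dsimp only; omega) (by dsimp only; omega)
        omega
    have b1 := h1 _ hp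
    have b2 := h1 _ hp1
    simp only [hq, hq1, if_pos, neg_add]
    have e : (-(q.2) + -1 : ℤ) = -q.2 - 1 := by ring
    rw [e]
    omega

end Aux
/-- if `λ ∈ 𝒫` and `λ^♯ ∈ 𝒫′` is its transpose, then
`T ↦ T′`, `T′(k,l) = M+N+1-T(-l,-k)`, is a bijection `ℬ₋(λ) → ℬ′₊(λ^♯)`. -/
theorem statement2 (M N : ℕ) (hM : 1 ≤ M) (hN : 1 ≤ N) (lam mu : ℕ → ℕ)
    (hlam : inP M N lam) (hmu : inP N M mu)
    (hY : ∀ k l : ℕ, (k, l) ∈ Yp N M mu ↔ (l, k) ∈ Yp M N lam) :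
    Set.BijOn
      (fun (T : ℤ × ℤ → ℕ) (p : ℤ × ℤ) =>
        if p ∈ YpZ N M mu then M + N + 1 - T (-p.2, -p.1) else 0)
      (Bneg M N lam) (BposP M N mu) := by
  set F := fun (T : ℤ × ℤ → ℕ) (p : ℤ × ℤ) =>
      if p ∈ YpZ N M mu then M + N + 1 - T (-p.2, -p.1) else 0 with hF
  set G := fun (S : ℤ × ℤ → ℕ) (q : ℤ × ℤ) =>
      if q ∈ YnZ M N lam then M + N + 1 - S (-q.2, -q.1) else 0 with hG
  have hinv : Set.InvOn G F (Bneg M N lam) (BposP M N mu) := by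
    constructor
    · intro T hT
      funext q
      by_cases hq : q ∈ YnZ M N lam
      · have hp : (-q.2, -q.1) ∈ YpZ N M mu := (mem_swap' hY q).mp hq
        have b1 := hT.2.1 _ hq
        simp only [hG, hF, hq, if_pos, hp, neg_neg, Prod.mk.eta]
        omega
      · have := hT.1 _ hq
        simp [hG, hq, this]
    · intro S hS
      funext p
      by_cases hp : p ∈ YpZ N M mu
      · have hq : (-p.2, -p.1) ∈ YnZ M N lam := (mem_swap hY p).mp hp
        have b1 := hS.2.1 _ hp
        simp only [hF, hG, hp, if_pos, hq, neg_neg, Prod.mk.eta]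
        omega
      · have := hS.1 _ hp
        simp [hF, hp, this]
  exact hinv.bijOn (fun T hT => forward_mem hY hT) (fun S hS => backward_mem hY hS)


end QAS
end

section
/- For every integer m ≥ N one has |ℬ₊(mϖ_M)| = 2^{MN}; that is, the number of Benkart–Kang–Kashiwara tableaux of rectangular shape with M rows and m columns, with entries in {1,…,M+N}, equals 2^{MN} whenever m ≥ N. (This is the combinatorial form of the statement that the Kirillov–Reshetikhin module W_{m,a}^{(M)} has dimension 2^{MN} for m ≥ N.) -/
namespace QAS

instance chainDecInst {α : Type*} {R : α → α → Prop} [DecidableRel R] (l : List α) :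
    Decidable (l.Chain' R) := inferInstanceAs (Decidable (l.IsChain R))

@[simp] lemma chain'_iff_isChain {α : Type*} {R : α → α → Prop} {l : List α} :
    l.Chain' R ↔ l.IsChain R := Iff.rfl

/-- the set of Benkart–Kang–Kashiwara tableaux `ℬ₊(λ)`, encoded as functions
`ℕ × ℕ → ℕ` vanishing off `Y₊^λ` and with values in `{1,…,M+N}` on `Y₊^λ`. -/
def Bpos (M N : ℕ) (lam : ℕ → ℕ) : Set (ℕ × ℕ → ℕ) :=
  {T | (∀ p, p ∉ Yp M N lam → T p = 0) ∧
    (∀ p ∈ Yp M N lam, 1 ≤ T p ∧ T p ≤ M + N) ∧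
    (∀ p ∈ Yp M N lam, ∀ p' ∈ Yp M N lam, p.1 ≤ p'.1 → p.2 ≤ p'.2 → T p ≤ T p') ∧
    (∀ p ∈ Yp M N lam, (p.1 + 1, p.2) ∈ Yp M N lam → T p ≤ M → T p < T (p.1 + 1, p.2)) ∧
    (∀ p ∈ Yp M N lam, (p.1, p.2 + 1) ∈ Yp M N lam → M < T p → T p < T (p.1, p.2 + 1))}

/-- `mϖ_j`: the element of `𝒫` whose first `j` coordinates equal `m` and whose
remaining coordinates are `0`. -/
def wt (j m : ℕ) : ℕ → ℕ := fun k => if 1 ≤ k ∧ k ≤ j then m else 0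

/-! ### Counting layer: strips and interlacing -/

/-- vertical strips below `ν` (as lists, possibly non-monotone junk included) -/
def vst : List ℕ → Finset (List ℕ)
  | [] => {[]}
  | x :: r => (Finset.Icc (x - 1) x).biUnion fun e => (vst r).image (e :: ·)

/-- interlacing sequences (GT rows) below `ν` -/
def inter : List ℕ → Finset (List ℕ)
  | [] => {[]}
  | [_] => {[]}
  | x :: y :: r => (Finset.Icc y x).biUnion fun t => (inter (y :: r)).image (t :: ·)

lemma mem_vst_cons {x : ℕ} {r κ : List ℕ} :
    κ ∈ vst (x :: r) ↔ ∃ e κ', κ = e :: κ' ∧ x - 1 ≤ e ∧ e ≤ x ∧ κ' ∈ vst r := by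
  simp only [vst, Finset.mem_biUnion, Finset.mem_image, Finset.mem_Icc]
  constructor
  · rintro ⟨e, ⟨h1, h2⟩, κ', hκ', rfl⟩
    exact ⟨e, κ', rfl, h1, h2, hκ'⟩
  · rintro ⟨e, κ', rfl, h1, h2, hκ'⟩
    exact ⟨e, ⟨h1, h2⟩, κ', hκ', rfl⟩

lemma mem_vst_nil {κ : List ℕ} : κ ∈ vst [] ↔ κ = [] := by simp [vst]

lemma mem_inter_single {x : ℕ} {τ : List ℕ} : τ ∈ inter [x] ↔ τ = [] := by simp [inter]

lemma mem_inter_nil {τ : List ℕ} : τ ∈ inter [] ↔ τ = [] := by simp [inter]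

lemma mem_inter_cons2 {x y : ℕ} {r τ : List ℕ} :
    τ ∈ inter (x :: y :: r) ↔ ∃ t τ', τ = t :: τ' ∧ y ≤ t ∧ t ≤ x ∧ τ' ∈ inter (y :: r) := by
  simp only [inter, Finset.mem_biUnion, Finset.mem_image, Finset.mem_Icc]
  constructor
  · rintro ⟨t, ⟨h1, h2⟩, τ', hτ', rfl⟩
    exact ⟨t, τ', rfl, h1, h2, hτ'⟩
  · rintro ⟨t, τ', rfl, h1, h2, hτ'⟩
    exact ⟨t, ⟨h1, h2⟩, τ', hτ', rfl⟩

lemma length_of_mem_vst : ∀ {ν κ : List ℕ}, κ ∈ vst ν → κ.length = ν.length := by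
  intro ν
  induction ν with
  | nil => intro κ h; rw [mem_vst_nil] at h; simp [h]
  | cons x r ih =>
    intro κ h
    rw [mem_vst_cons] at h
    obtain ⟨e, κ', rfl, -, -, h⟩ := h
    simp [ih h]

lemma length_of_mem_inter : ∀ {ν τ : List ℕ}, τ ∈ inter ν → τ.length = ν.length - 1 := by
  intro ν
  induction ν with
  | nil => intro τ h; rw [mem_inter_nil] at h; simp [h]
  | cons x r ih =>
    match r with
    | [] => intro τ h; rw [mem_inter_single] at h; simp [h]
    | y :: r' =>
      intro τ h
      rw [mem_inter_cons2] at h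
      obtain ⟨t, τ', rfl, -, -, h⟩ := h
      have := ih h
      simp at this ⊢
      omega

/-- members of `inter ν` are automatically weakly decreasing -/
lemma chain'_of_mem_inter : ∀ {ν τ : List ℕ}, τ ∈ inter ν → τ.Chain' (· ≥ ·) := by
  intro ν
  induction ν with
  | nil => intro τ h; rw [mem_inter_nil] at h; simp [h]
  | cons x r ih =>
    match r with
    | [] => intro τ h; rw [mem_inter_single] at h; simp [h]
    | y :: r' =>
      intro τ h
      rw [mem_inter_cons2] at h
      obtain ⟨t, τ', rfl, hyt, -, h⟩ := h
      have hc := ih h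
      match r', τ', h with
      | [], τ', h => rw [mem_inter_single] at h; subst h; simp
      | z :: r'', τ', h =>
        rw [mem_inter_cons2] at h
        obtain ⟨t', τ'', rfl, hzt', ht'y, -⟩ := h
        exact List.IsChain.cons_cons (le_trans ht'y hyt) hc

lemma inter_eq_empty_of_not_chain : ∀ {ν : List ℕ}, ¬ ν.Chain' (· ≥ ·) → inter ν = ∅ := by
  intro ν
  induction ν with
  | nil => intro h; exact absurd List.isChain_nil h
  | cons x r ih =>
    match r with
    | [] => intro h; simp at h
    | y :: r' =>
      intro h
      rw [List.Chain', List.isChain_cons_cons] at h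
      push_neg at h
      by_cases hxy : y ≤ x
      · have h2 := h hxy
        ext τ
        simp only [Finset.notMem_empty, iff_false]
        intro hm
        rw [mem_inter_cons2] at hm
        obtain ⟨t, τ', rfl, -, -, hm⟩ := hm
        rw [ih h2] at hm
        exact absurd hm (Finset.notMem_empty _)
      · ext τ
        simp only [Finset.notMem_empty, iff_false]
        intro hm
        rw [mem_inter_cons2] at hm
        obtain ⟨t, τ', rfl, h1, h2, -⟩ := hm
        omega

/-! ### counting functions -/

/-- number of GT patterns (column-strict tableaux) with top row `ν` (when `ν.length = s`) -/
def J0 : ℕ → List ℕ → ℕ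
  | 0, _ => 1
  | s+1, ν => ∑ τ ∈ inter ν, J0 s τ

/-- number of super tableaux of shape `ν` with `s` small and `B` big letters
(when `ν.length = s`) -/
def J : ℕ → ℕ → List ℕ → ℕ
  | s, 0, ν => J0 s ν
  | s, B+1, ν => ∑ κ ∈ (vst ν).filter (fun l => l.Chain' (· ≥ ·)), J s B κ

lemma J0_succ (s : ℕ) (ν : List ℕ) : J0 (s+1) ν = ∑ τ ∈ inter ν, J0 s τ := rfl
lemma J_zero (s : ℕ) (ν : List ℕ) : J s 0 ν = J0 s ν := rfl
lemma J_succ (s B : ℕ) (ν : List ℕ) :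
    J s (B+1) ν = ∑ κ ∈ (vst ν).filter (fun l => l.Chain' (· ≥ ·)), J s B κ := rfl

lemma J0_eq_zero {s : ℕ} {ν : List ℕ} (h : ¬ ν.Chain' (· ≥ ·)) : J0 (s+1) ν = 0 := by
  rw [J0_succ, inter_eq_empty_of_not_chain h, Finset.sum_empty]


/-! ### double sum exchange and filter-card tools -/

lemma sum_exchange {α β : Type*} [DecidableEq α] [DecidableEq β]
    (s : Finset α) (t : α → Finset β) (U : Finset β) (hU : ∀ a ∈ s, t a ⊆ U) (f : β → ℕ) :
    ∑ a ∈ s, ∑ b ∈ t a, f b = ∑ b ∈ U, ((s.filter (fun a => b ∈ t a)).card) * f b := by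
  have h1 : ∀ a ∈ s, ∑ b ∈ t a, f b = ∑ b ∈ U, if b ∈ t a then f b else 0 := by
    intro a ha
    rw [← Finset.sum_filter]
    congr 1
    ext b
    simp only [Finset.mem_filter]
    exact ⟨fun h => ⟨hU a ha h, h⟩, fun h => h.2⟩
  rw [Finset.sum_congr rfl h1, Finset.sum_comm]
  refine Finset.sum_congr rfl fun b _ => ?_
  rw [← Finset.sum_filter, Finset.sum_const, smul_eq_mul]

lemma card_filter_Icc_pred {a : ℕ} (ha : 1 ≤ a) (p : ℕ → Prop) [DecidablePred p] :
    ((Finset.Icc (a-1) a).filter p).card = (if p (a-1) then 1 else 0) + (if p a then 1 else 0) := by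
  have h : Finset.Icc (a-1) a = {a-1, a} := by
    ext z; simp only [Finset.mem_Icc, Finset.mem_insert, Finset.mem_singleton]; omega
  rw [h]
  have hne : a - 1 ≠ a := by omega
  rw [Finset.filter_insert, Finset.filter_singleton]
  by_cases h1 : p (a-1) <;> by_cases h2 : p a <;> simp [h1, h2, hne]

lemma disjoint_cons_image {s t : Finset (List ℕ)} {a b : ℕ} (hab : a ≠ b) :
    Disjoint (s.image (a :: ·)) (t.image (b :: ·)) := by
  simp only [Finset.disjoint_left]
  intro l hl hl'
  simp only [Finset.mem_image] at hl hl'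
  obtain ⟨l1, -, rfl⟩ := hl
  obtain ⟨l2, -, heq⟩ := hl'
  exact hab (by injection heq with h _; exact h.symm)

lemma card_filter_vst_cons (x : ℕ) (r : List ℕ) (P : List ℕ → Prop) [DecidablePred P] :
    ((vst (x :: r)).filter P).card
      = ∑ e ∈ Finset.Icc (x-1) x, ((vst r).filter (fun κ' => P (e :: κ'))).card := by
  rw [show vst (x :: r) = (Finset.Icc (x-1) x).biUnion fun e => (vst r).image (e :: ·) from rfl]
  rw [Finset.filter_biUnion, Finset.card_biUnion]
  · refine Finset.sum_congr rfl fun e _ => ?_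
    rw [Finset.filter_image, Finset.card_image_of_injective _ (fun a b h => by injection h)]
  · intro a _ b _ hab
    exact Finset.disjoint_filter_filter (disjoint_cons_image hab)

lemma card_filter_inter_cons2 (x y : ℕ) (r : List ℕ) (P : List ℕ → Prop) [DecidablePred P] :
    ((inter (x :: y :: r)).filter P).card
      = ∑ t ∈ Finset.Icc y x, ((inter (y :: r)).filter (fun τ' => P (t :: τ'))).card := by
  rw [show inter (x :: y :: r) = (Finset.Icc y x).biUnion fun t => (inter (y :: r)).image (t :: ·)
    from rfl]
  rw [Finset.filter_biUnion, Finset.card_biUnion]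
  · refine Finset.sum_congr rfl fun e _ => ?_
    rw [Finset.filter_image, Finset.card_image_of_injective _ (fun a b h => by injection h)]
  · intro a _ b _ hab
    exact Finset.disjoint_filter_filter (disjoint_cons_image hab)

/-! ### the A and B counts -/

def Acard (p : ℕ) (ν τ : List ℕ) : ℕ :=
  ((vst ν).filter fun κ => κ.headD 0 ≤ p ∧ τ ∈ inter κ).card

def Bcard (ν τ : List ℕ) : ℕ :=
  ((inter (ν.map (· - 1))).filter fun σ => τ ∈ vst (σ.map (· + 1))).card

lemma Acard_base (p x : ℕ) :
    Acard p [x] [] = ((Finset.Icc (x-1) x).filter fun h => h ≤ p).card := by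
  unfold Acard
  rw [card_filter_vst_cons]
  rw [Finset.card_filter]
  refine Finset.sum_congr rfl fun e _ => ?_
  rw [show vst ([] : List ℕ) = {[]} from rfl]
  rw [Finset.filter_singleton]
  by_cases h : e ≤ p
  · simp [h, mem_inter_single]
  · simp [h]

lemma Bcard_base (x : ℕ) : Bcard [x] [] = 1 := by
  unfold Bcard
  simp only [List.map_cons, List.map_nil]
  rw [show inter [x-1] = {[]} from rfl]
  rw [Finset.filter_singleton]
  simp [mem_vst_nil]


lemma cnt_eval (x p t : ℕ) :
    ((Finset.Icc (x-1) x).filter fun h => t ≤ h ∧ h ≤ p).card = (min x p + 1) - max (x-1) t := by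
  have h : (Finset.Icc (x-1) x).filter (fun h => t ≤ h ∧ h ≤ p)
      = Finset.Icc (max (x-1) t) (min x p) := by
    ext h; simp only [Finset.mem_filter, Finset.mem_Icc]; omega
  rw [h, Nat.card_Icc]

lemma cnt0_eval (x p : ℕ) :
    ((Finset.Icc (x-1) x).filter fun h => h ≤ p).card = (min x p + 1) - (x-1) := by
  have h : (Finset.Icc (x-1) x).filter (fun h => h ≤ p)
      = Finset.Icc (x-1) (min x p) := by
    ext h; simp only [Finset.mem_filter, Finset.mem_Icc]; omega
  rw [h, Nat.card_Icc]

lemma bf_eval (x y t : ℕ) :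
    ((Finset.Icc (y-1) (x-1)).filter fun g => g ≤ t ∧ t ≤ g+1).card
      = (min (x-1) t + 1) - max (y-1) (t-1) := by
  have h : (Finset.Icc (y-1) (x-1)).filter (fun g => g ≤ t ∧ t ≤ g+1)
      = Finset.Icc (max (y-1) (t-1)) (min (x-1) t) := by
    ext g; simp only [Finset.mem_filter, Finset.mem_Icc]; omega
  rw [h, Nat.card_Icc]

lemma Acard_cons2 (p x y t : ℕ) (r τ' : List ℕ) :
    Acard p (x :: y :: r) (t :: τ') =
      ((Finset.Icc (x-1) x).filter fun h => t ≤ h ∧ h ≤ p).card * Acard t (y :: r) τ' := by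
  unfold Acard
  rw [card_filter_vst_cons]
  have key : ∀ e, ((vst (y :: r)).filter
       (fun κ' => (e :: κ').headD 0 ≤ p ∧ (t :: τ') ∈ inter (e :: κ'))).card
      = if (t ≤ e ∧ e ≤ p) then ((vst (y :: r)).filter fun κ => κ.headD 0 ≤ t ∧ τ' ∈ inter κ).card
        else 0 := by
    intro e
    have hcong : (vst (y :: r)).filter
          (fun κ' => (e :: κ').headD 0 ≤ p ∧ (t :: τ') ∈ inter (e :: κ'))
        = (vst (y :: r)).filter
          (fun κ' => (t ≤ e ∧ e ≤ p) ∧ (κ'.headD 0 ≤ t ∧ τ' ∈ inter κ')) := by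
      apply Finset.filter_congr
      intro κ' hκ'
      rw [mem_vst_cons] at hκ'
      obtain ⟨f, κ'', rfl, -, -, -⟩ := hκ'
      simp only [List.headD_cons]
      rw [mem_inter_cons2]
      constructor
      · rintro ⟨hep, t₀, τ₀, heq, h1, h2, h3⟩
        obtain ⟨rfl, rfl⟩ : t₀ = t ∧ τ₀ = τ' := by
          constructor <;> injection heq.symm
        exact ⟨⟨h2, hep⟩, by simpa using h1, h3⟩
      · rintro ⟨⟨h2, hep⟩, h1, h3⟩
        exact ⟨hep, t, τ', rfl, by simpa using h1, h2, h3⟩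
    rw [hcong]
    by_cases hC : t ≤ e ∧ e ≤ p
    · rw [if_pos hC]
      congr 1
      apply Finset.filter_congr
      intro κ' _
      simp [hC]
    · rw [if_neg hC]
      rw [Finset.card_eq_zero, Finset.filter_eq_empty_iff]
      intro κ' _ h
      exact hC h.1
  rw [Finset.sum_congr rfl (fun e _ => key e), Finset.sum_ite, Finset.sum_const,
    Finset.sum_const, smul_eq_mul, smul_eq_mul, mul_zero, add_zero]

lemma Bcard_cons2 (x y t : ℕ) (r τ' : List ℕ) :
    Bcard (x :: y :: r) (t :: τ') =
      ((Finset.Icc (y-1) (x-1)).filter fun g => g ≤ t ∧ t ≤ g + 1).card * Bcard (y :: r) τ' := by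
  unfold Bcard
  simp only [List.map_cons]
  rw [card_filter_inter_cons2]
  have key : ∀ g, ((inter ((y-1) :: r.map (· - 1))).filter
        (fun σ' => (t :: τ') ∈ vst ((g :: σ').map (· + 1)))).card
      = if (g ≤ t ∧ t ≤ g + 1) then
          ((inter ((y-1) :: r.map (· - 1))).filter
            (fun σ => τ' ∈ vst (σ.map (· + 1)))).card
        else 0 := by
    intro g
    have hcong : (inter ((y-1) :: r.map (· - 1))).filter
          (fun σ' => (t :: τ') ∈ vst ((g :: σ').map (· + 1)))
        = (inter ((y-1) :: r.map (· - 1))).filter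
          (fun σ' => (g ≤ t ∧ t ≤ g + 1) ∧ τ' ∈ vst (σ'.map (· + 1))) := by
      apply Finset.filter_congr
      intro σ' _
      simp only [List.map_cons]
      rw [mem_vst_cons]
      constructor
      · rintro ⟨e, κ', heq, h1, h2, h3⟩
        obtain ⟨rfl, rfl⟩ : e = t ∧ κ' = τ' := by
          constructor <;> injection heq.symm
        refine ⟨⟨by omega, h2⟩, h3⟩
      · rintro ⟨⟨h1, h2⟩, h3⟩
        exact ⟨t, τ', rfl, by omega, h2, h3⟩
    rw [hcong]
    by_cases hC : g ≤ t ∧ t ≤ g + 1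
    · rw [if_pos hC]
      congr 1
      apply Finset.filter_congr
      intro σ' _
      simp [hC]
    · rw [if_neg hC]
      rw [Finset.card_eq_zero, Finset.filter_eq_empty_iff]
      intro σ' _ h
      exact hC h.1
  rw [Finset.sum_congr rfl (fun g _ => key g), Finset.sum_ite, Finset.sum_const,
    Finset.sum_const, smul_eq_mul, smul_eq_mul, mul_zero, add_zero]

lemma Acard_sat {p y : ℕ} (hyp : y ≤ p) (r τ : List ℕ) :
    Acard p (y :: r) τ = Acard y (y :: r) τ := by
  unfold Acard
  congr 1
  apply Finset.filter_congr
  intro κ hκ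
  rw [mem_vst_cons] at hκ
  obtain ⟨e, κ', rfl, -, he, -⟩ := hκ
  simp only [List.headD_cons]
  constructor
  · rintro ⟨-, h2⟩; exact ⟨he, h2⟩
  · rintro ⟨h1, h2⟩; exact ⟨le_trans h1 hyp, h2⟩



/-! ### the key identity `A = 2B` (mutual induction) -/

lemma LG : ∀ n : ℕ,
    (∀ (x : ℕ) (ν' τ : List ℕ), ν'.length = n → τ.length = n →
      (x :: ν').Chain' (· ≥ ·) → (∀ a ∈ x :: ν', 1 ≤ a) → τ.Chain' (· ≥ ·) →
      Acard x (x :: ν') τ = 2 * Bcard (x :: ν') τ) ∧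
    (∀ (x t y : ℕ) (r τ' : List ℕ), r.length + 1 = n → τ'.length = r.length →
      t + 1 ≤ x → (x :: y :: r).Chain' (· ≥ ·) → (∀ a ∈ x :: y :: r, 1 ≤ a) →
      (t :: τ').Chain' (· ≥ ·) →
      Acard t (y :: r) τ' = Bcard (x :: y :: r) (t :: τ')) := by
  intro n
  induction n with
  | zero =>
    constructor
    · intro x ν' τ hlν hlτ hchain hparts hτc
      rw [List.length_eq_zero_iff] at hlν hlτ
      subst hlν; subst hlτ
      have hx : 1 ≤ x := hparts x (by simp)
      rw [Acard_base, cnt0_eval, Bcard_base]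
      omega
    · intro x t y r τ' hl
      exact (Nat.succ_ne_zero _ hl).elim
  | succ n ih =>
    obtain ⟨ihL, ihG⟩ := ih
    constructor
    · -- L
      intro x ν' τ hlν hlτ hchain hparts hτc
      match ν', τ with
      | y :: r, t :: τ' =>
      simp only [List.length_cons, Nat.add_right_cancel_iff] at hlν hlτ
      have hyx : y ≤ x := (List.isChain_cons_cons.mp hchain).1
      have hchain' : (y :: r).Chain' (· ≥ ·) := (List.isChain_cons_cons.mp hchain).2
      have hx : 1 ≤ x := hparts x (by simp)
      have hy : 1 ≤ y := hparts y (by simp)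
      have hparts' : ∀ a ∈ y :: r, 1 ≤ a := fun a ha => hparts a (List.mem_cons_of_mem _ ha)
      have hτc' : τ'.Chain' (· ≥ ·) := hτc.tail
      rw [Acard_cons2, cnt_eval, Bcard_cons2, bf_eval]
      by_cases h1 : x + 1 ≤ t
      · have c1 : min x x + 1 - max (x-1) t = 0 := by omega
        have c2 : min (x-1) t + 1 - max (y-1) (t-1) = 0 := by omega
        rw [c1, c2]; ring
      by_cases h2 : t = x
      · have c1 : min x x + 1 - max (x-1) t = 1 := by omega
        have c2 : min (x-1) t + 1 - max (y-1) (t-1) = 1 := by omega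
        rw [c1, c2, one_mul, one_mul, Acard_sat (h2 ▸ hyx)]
        exact ihL y r τ' hlν hlτ hchain' hparts' hτc'
      -- now t ≤ x - 1
      have htx : t + 1 ≤ x := by omega
      have c1 : min x x + 1 - max (x-1) t = 2 := by omega
      rw [c1]
      by_cases h3 : y ≤ t
      · have c2 : min (x-1) t + 1 - max (y-1) (t-1) = 2 := by omega
        rw [c2, Acard_sat h3]
        rw [ihL y r τ' hlν hlτ hchain' hparts' hτc']
      by_cases h4 : t = y - 1
      · have c2 : min (x-1) t + 1 - max (y-1) (t-1) = 1 := by omega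
        rw [c2]
        have key : Acard t (y :: r) τ' = Bcard (y :: r) τ' := by
          match r, τ', hlν, hlτ with
          | [], [], _, _ =>
            rw [Acard_base, cnt0_eval, Bcard_base]; omega
          | z :: r', t' :: τ'', hlν, hlτ =>
            have ht' : t' ≤ t := (List.isChain_cons_cons.mp hτc).1
            rw [Acard_cons2, cnt_eval]
            have c3 : min y t + 1 - max (y-1) t' = 1 := by omega
            rw [c3, one_mul]
            have e1 : r'.length + 1 = n := by simpa using hlν
            have e2 : τ''.length = r'.length := by
              simp only [List.length_cons] at hlν hlτ; omega
            exact ihG y t' z r' τ'' e1 e2 (by omega) hchain' hparts' hτc' 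
        rw [key]; ring
      · -- t ≤ y - 2
        have c2 : min (x-1) t + 1 - max (y-1) (t-1) = 0 := by omega
        rw [c2]
        have key : Acard t (y :: r) τ' = 0 := by
          match r, τ', hlν, hlτ with
          | [], [], _, _ =>
            rw [Acard_base, cnt0_eval]; omega
          | z :: r', t' :: τ'', hlν, hlτ =>
            rw [Acard_cons2, cnt_eval]
            have c3 : min y t + 1 - max (y-1) t' = 0 := by omega
            rw [c3, zero_mul]
        rw [key]; ring
    · -- G
      intro x t y r τ' hl hlτ htx hchain hparts hτc
      have hyx : y ≤ x := (List.isChain_cons_cons.mp hchain).1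
      have hchain' : (y :: r).Chain' (· ≥ ·) := (List.isChain_cons_cons.mp hchain).2
      have hx : 1 ≤ x := hparts x (by simp)
      have hy : 1 ≤ y := hparts y (by simp)
      have hparts' : ∀ a ∈ y :: r, 1 ≤ a := fun a ha => hparts a (List.mem_cons_of_mem _ ha)
      have hτc' : τ'.Chain' (· ≥ ·) := hτc.tail
      match r, τ', hlτ with
      | [], [], _ =>
        rw [Acard_base, cnt0_eval, Bcard_cons2, bf_eval, Bcard_base]
        omega
      | z :: r', t' :: τ'', hlτ =>
        have ht' : t' ≤ t := (List.isChain_cons_cons.mp hτc).1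
        have hzy : z ≤ y := (List.isChain_cons_cons.mp hchain').1
        have hchain'' : (z :: r').Chain' (· ≥ ·) := (List.isChain_cons_cons.mp hchain').2
        have hz : 1 ≤ z := hparts z (by simp)
        have hparts'' : ∀ a ∈ z :: r', 1 ≤ a := fun a ha => hparts' a (List.mem_cons_of_mem _ ha)
        have hτc'' : (t' :: τ'').Chain' (· ≥ ·) := hτc.tail
        have hlν' : r'.length + 1 = n := by simpa using hl
        have hlτ' : τ''.length = r'.length := by simpa using hlτ
        rw [Acard_cons2, cnt_eval, Bcard_cons2, bf_eval]
        by_cases h3 : y ≤ t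
        · have c2 : min (x-1) t + 1 - max (y-1) (t-1) = 2 := by omega
          rw [c2]
          have hLuse := ihL y (z :: r') (t' :: τ'')
            (by simp only [List.length_cons]; omega) (by simp only [List.length_cons]; omega)
            hchain' hparts' hτc.tail
          rw [Acard_cons2, cnt_eval] at hLuse
          have cEq : min y t + 1 - max (y-1) t' = min y y + 1 - max (y-1) t' := by omega
          rw [cEq, hLuse]
        by_cases h4 : t = y - 1
        · have c2 : min (x-1) t + 1 - max (y-1) (t-1) = 1 := by omega
          have c3 : min y t + 1 - max (y-1) t' = 1 := by omega
          rw [c2, c3, one_mul, one_mul]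
          exact ihG y t' z r' τ'' hlν' hlτ' (by omega) hchain' hparts' hτc''
        · have c2 : min (x-1) t + 1 - max (y-1) (t-1) = 0 := by omega
          have c3 : min y t + 1 - max (y-1) t' = 0 := by omega
          rw [c2, c3, zero_mul, zero_mul]



/-! ### the key counting identity (★) -/

lemma map_add_sub_cancel (σ : List ℕ) : (σ.map (· + 1)).map (· - 1) = σ := by
  rw [List.map_map]
  have : ∀ a ∈ σ, (((· - 1) ∘ (· + 1)) a) = id a := by intro a _; simp
  rw [List.map_congr_left this, List.map_id]

lemma chain'_map_add (σ : List ℕ) (h : σ.Chain' (· ≥ ·)) :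
    (σ.map (· + 1)).Chain' (· ≥ ·) := by
  rw [List.Chain', List.isChain_map]
  exact h.imp (fun a b hab => by simpa using hab)

lemma star : ∀ (s : ℕ) (ν : List ℕ), ν.length = s → ν.Chain' (· ≥ ·) → (∀ a ∈ ν, 1 ≤ a) →
    ∑ κ ∈ vst ν, J0 s κ = 2 ^ s * J0 s (ν.map (· - 1)) := by
  intro s
  induction s with
  | zero =>
    intro ν hlen _ _
    rw [List.length_eq_zero_iff] at hlen
    subst hlen
    simp [vst, J0]
  | succ s ih =>
    intro ν hlen hchain hparts
    -- both sides as weighted sums over a common domain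
    classical
    set U : Finset (List ℕ) := (vst ν).biUnion inter with hUdef
    set U' : Finset (List ℕ) :=
      (inter (ν.map (· - 1))).biUnion (fun σ => vst (σ.map (· + 1))) with hU'def
    set V := U ∪ U' with hVdef
    have hlenU : ∀ τ ∈ V, τ.length = s := by
      intro τ hτ
      rw [hVdef, Finset.mem_union] at hτ
      rcases hτ with hτ | hτ
      · rw [hUdef, Finset.mem_biUnion] at hτ
        obtain ⟨κ, hκ, hτ⟩ := hτ
        rw [length_of_mem_inter hτ, length_of_mem_vst hκ, hlen]
        omega
      · rw [hU'def, Finset.mem_biUnion] at hτ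
        obtain ⟨σ, hσ, hτ⟩ := hτ
        rw [length_of_mem_vst hτ, List.length_map, length_of_mem_inter hσ,
          List.length_map, hlen]
        omega
    -- LHS
    have hLHS : ∑ κ ∈ vst ν, J0 (s+1) κ
        = ∑ τ ∈ V, ((vst ν).filter (fun κ => τ ∈ inter κ)).card * J0 s τ := by
      rw [Finset.sum_congr rfl (fun κ _ => J0_succ s κ)]
      exact sum_exchange (vst ν) inter V
        (fun κ hκ => (Finset.subset_biUnion_of_mem inter hκ).trans Finset.subset_union_left)
        (J0 s)
    -- RHS
    have hRHS : 2 ^ (s+1) * J0 (s+1) (ν.map (· - 1))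
        = ∑ τ ∈ V, 2 * (((inter (ν.map (· - 1))).filter
            (fun σ => τ ∈ vst (σ.map (· + 1)))).card * J0 s τ) := by
      rw [J0_succ, Finset.mul_sum]
      have step : ∀ σ ∈ inter (ν.map (· - 1)),
          2 ^ (s+1) * J0 s σ = 2 * ∑ τ ∈ vst (σ.map (· + 1)), J0 s τ := by
        intro σ hσ
        have hc : σ.Chain' (· ≥ ·) := chain'_of_mem_inter hσ
        have hmap := ih (σ.map (· + 1)) (by
            rw [List.length_map, length_of_mem_inter hσ, List.length_map, hlen]; omega)
          (chain'_map_add σ hc) (by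
            intro a ha
            rw [List.mem_map] at ha
            obtain ⟨b, -, rfl⟩ := ha
            omega)
        rw [map_add_sub_cancel] at hmap
        rw [hmap, pow_succ]
        ring
      rw [Finset.sum_congr rfl step, ← Finset.mul_sum]
      rw [sum_exchange (inter (ν.map (· - 1))) (fun σ => vst (σ.map (· + 1))) V
        (fun σ hσ => (Finset.subset_biUnion_of_mem
          (fun σ => vst (σ.map (· + 1))) hσ).trans Finset.subset_union_right)
        (J0 s), Finset.mul_sum]
    rw [hLHS, hRHS]
    -- pointwise comparison
    refine Finset.sum_congr rfl fun τ hτ => ?_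
    by_cases hc : τ.Chain' (· ≥ ·)
    · -- use LG
      have hne : ν ≠ [] := by intro h; subst h; simp at hlen
      obtain ⟨x, ν'', rfl⟩ := List.exists_cons_of_ne_nil hne
      have hbridge : ((vst (x :: ν'')).filter (fun κ => τ ∈ inter κ)).card
          = Acard x (x :: ν'') τ := by
        unfold Acard
        congr 1
        apply (Finset.filter_congr ?_).symm
        intro κ hκ
        rw [mem_vst_cons] at hκ
        obtain ⟨e, κ', rfl, -, he, -⟩ := hκ
        simp only [List.headD_cons]
        exact ⟨fun h => h.2, fun h => ⟨he, h⟩⟩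
      rw [hbridge]
      have hLG := (LG s).1 x ν'' τ (by simpa using hlen) (hlenU τ hτ)
        hchain hparts hc
      rw [hLG]
      unfold Bcard
      ring
    · -- non-monotone τ: weight J0 is zero
      have hlτ := hlenU τ hτ
      have hs2 : 2 ≤ s := by
        by_contra hs
        have hτ1 : τ.length ≤ 1 := by omega
        rcases τ with _ | ⟨a, _ | ⟨b, τ'⟩⟩
        · exact hc List.isChain_nil
        · exact hc (List.isChain_singleton a)
        · simp at hτ1
      obtain ⟨s', rfl⟩ : ∃ s', s = s' + 1 := ⟨s - 1, by omega⟩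
      rw [J0_eq_zero hc, mul_zero, mul_zero, mul_zero]

/-! ### core counting theorem -/

lemma J0_len_eq_zero {s : ℕ} {κ : List ℕ} (hl : κ.length = s) (hc : ¬ κ.Chain' (· ≥ ·)) :
    J0 s κ = 0 := by
  have hs2 : 2 ≤ s := by
    by_contra hs
    have hτ1 : κ.length ≤ 1 := by omega
    rcases κ with _ | ⟨a, _ | ⟨b, κ'⟩⟩
    · exact hc List.isChain_nil
    · exact hc (List.isChain_singleton a)
    · simp at hτ1
  obtain ⟨s', rfl⟩ : ∃ s', s = s' + 1 := ⟨s - 1, by omega⟩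
  exact J0_eq_zero hc

lemma vst_parts {B : ℕ} : ∀ {ν κ : List ℕ}, (∀ a ∈ ν, B + 1 ≤ a) → κ ∈ vst ν →
    ∀ a ∈ κ, B ≤ a := by
  intro ν
  induction ν with
  | nil => intro κ _ hκ; rw [mem_vst_nil] at hκ; subst hκ; simp
  | cons x r ih =>
    intro κ hp hκ
    rw [mem_vst_cons] at hκ
    obtain ⟨e, κ', rfl, he1, -, hκ'⟩ := hκ
    intro a ha
    rcases List.mem_cons.mp ha with rfl | ha
    · have := hp x (by simp); omega
    · exact ih (fun b hb => hp b (List.mem_cons_of_mem _ hb)) hκ' a ha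

lemma mem_vst_map_sub {B : ℕ} : ∀ {ν κ : List ℕ}, (∀ a ∈ ν, B + 1 ≤ a) → κ ∈ vst ν →
    κ.map (· - B) ∈ vst (ν.map (· - B)) := by
  intro ν
  induction ν with
  | nil => intro κ _ hκ; rw [mem_vst_nil] at hκ; subst hκ; simpa using mem_vst_nil.mpr rfl
  | cons x r ih =>
    intro κ hp hκ
    rw [mem_vst_cons] at hκ
    obtain ⟨e, κ', rfl, he1, he2, hκ'⟩ := hκ
    simp only [List.map_cons]
    rw [mem_vst_cons]
    have hx := hp x (by simp)
    exact ⟨e - B, κ'.map (· - B), rfl, by omega, by omega,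
      ih (fun b hb => hp b (List.mem_cons_of_mem _ hb)) hκ'⟩

lemma mem_vst_map_add {B : ℕ} : ∀ {ν κ' : List ℕ}, (∀ a ∈ ν, B + 1 ≤ a) →
    κ' ∈ vst (ν.map (· - B)) → κ'.map (· + B) ∈ vst ν := by
  intro ν
  induction ν with
  | nil =>
    intro κ' _ hκ'
    simp only [List.map_nil] at hκ'
    rw [mem_vst_nil] at hκ'
    subst hκ'
    simpa using mem_vst_nil.mpr rfl
  | cons x r ih =>
    intro κ' hp hκ'
    simp only [List.map_cons] at hκ'
    rw [mem_vst_cons] at hκ'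
    obtain ⟨e, κ'', rfl, he1, he2, hκ''⟩ := hκ'
    simp only [List.map_cons]
    rw [mem_vst_cons]
    have hx := hp x (by simp)
    exact ⟨e + B, κ''.map (· + B), rfl, by omega, by omega,
      ih (fun b hb => hp b (List.mem_cons_of_mem _ hb)) hκ''⟩

lemma map_sub_add_cancel {B : ℕ} {κ : List ℕ} (h : ∀ a ∈ κ, B ≤ a) :
    (κ.map (· - B)).map (· + B) = κ := by
  rw [List.map_map]
  have h2 : ∀ a ∈ κ, (((· + B) ∘ (· - B)) a) = id a := by
    intro a ha; have := h a ha; simp only [Function.comp_apply, id_eq]; omega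
  rw [List.map_congr_left h2, List.map_id]

lemma map_add_sub_cancelB {B : ℕ} (κ : List ℕ) : (κ.map (· + B)).map (· - B) = κ := by
  rw [List.map_map]
  have h2 : ∀ a ∈ κ, (((· - B) ∘ (· + B)) a) = id a := by
    intro a _; simp only [Function.comp_apply, id_eq]; omega
  rw [List.map_congr_left h2, List.map_id]

lemma chain'_map_sub {B : ℕ} {κ : List ℕ} (h : κ.Chain' (· ≥ ·)) :
    (κ.map (· - B)).Chain' (· ≥ ·) := by
  rw [List.Chain', List.isChain_map]
  exact h.imp (fun a b hab => by simp only [ge_iff_le] at hab ⊢; omega)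

lemma chain'_map_addB {B : ℕ} {κ : List ℕ} (h : κ.Chain' (· ≥ ·)) :
    (κ.map (· + B)).Chain' (· ≥ ·) := by
  rw [List.Chain', List.isChain_map]
  exact h.imp (fun a b hab => by simp only [ge_iff_le] at hab ⊢; omega)

lemma core : ∀ (B s : ℕ) (ν : List ℕ), ν.length = s → ν.Chain' (· ≥ ·) → (∀ a ∈ ν, B ≤ a) →
    J s B ν = 2 ^ (s * B) * J0 s (ν.map (· - B)) := by
  intro B
  induction B with
  | zero =>
    intro s ν hlen hchain hparts
    rw [J_zero, Nat.mul_zero, pow_zero, one_mul]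
    congr 1
    have h2 : ∀ a ∈ ν, a - 0 = id a := by intro a _; simp
    rw [List.map_congr_left h2, List.map_id]
  | succ B ih =>
    intro s ν hlen hchain hparts
    rw [J_succ]
    have step : ∀ κ ∈ (vst ν).filter (fun l => l.Chain' (· ≥ ·)),
        J s B κ = 2 ^ (s * B) * J0 s (κ.map (· - B)) := by
      intro κ hκ
      rw [Finset.mem_filter] at hκ
      exact ih s κ (by rw [length_of_mem_vst hκ.1, hlen]) hκ.2
        (vst_parts hparts hκ.1)
    rw [Finset.sum_congr rfl step, ← Finset.mul_sum]
    have step2 : ∑ κ ∈ (vst ν).filter (fun l => l.Chain' (· ≥ ·)), J0 s (κ.map (· - B))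
        = ∑ κ' ∈ (vst (ν.map (· - B))).filter (fun l => l.Chain' (· ≥ ·)), J0 s κ' := by
      refine Finset.sum_nbij' (fun κ => κ.map (· - B)) (fun κ' => κ'.map (· + B))
        ?_ ?_ ?_ ?_ ?_
      · intro κ hκ
        rw [Finset.mem_filter] at hκ ⊢
        exact ⟨mem_vst_map_sub hparts hκ.1, chain'_map_sub hκ.2⟩
      · intro κ' hκ'
        rw [Finset.mem_filter] at hκ' ⊢
        exact ⟨mem_vst_map_add hparts hκ'.1, chain'_map_addB hκ'.2⟩
      · intro κ hκ
        rw [Finset.mem_filter] at hκ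
        exact map_sub_add_cancel (fun a ha => by
          have := vst_parts hparts hκ.1 a ha; omega)
      · intro κ' _
        exact map_add_sub_cancelB κ'
      · intro κ _
        rfl
    rw [step2]
    have step3 : ∑ κ' ∈ (vst (ν.map (· - B))).filter (fun l => l.Chain' (· ≥ ·)), J0 s κ'
        = ∑ κ' ∈ vst (ν.map (· - B)), J0 s κ' := by
      apply Finset.sum_filter_of_ne
      intro κ' hκ' hne
      by_contra hcc
      exact hne (J0_len_eq_zero (by
        rw [length_of_mem_vst hκ', List.length_map, hlen]) hcc)
    rw [step3]
    have step4 := star s (ν.map (· - B))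
      (by rw [List.length_map, hlen]) (chain'_map_sub hchain)
      (by
        intro a ha
        rw [List.mem_map] at ha
        obtain ⟨b, hb, rfl⟩ := ha
        have := hparts b hb
        omega)
    rw [step4]
    have step5 : (ν.map (· - B)).map (· - 1) = ν.map (· - (B+1)) := by
      rw [List.map_map]
      apply List.map_congr_left
      intro a _
      simp only [Function.comp_apply]
      omega
    rw [step5, ← mul_assoc, ← pow_add]
    have hexp : s * B + s = s * (B + 1) := by ring
    rw [hexp]

lemma inter_replicate (c : ℕ) : ∀ (s : ℕ), inter (List.replicate (s+1) c) = {List.replicate s c} := by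
  intro s
  induction s with
  | zero => rfl
  | succ s ih =>
    show inter (c :: c :: List.replicate s c) = _
    ext τ
    rw [mem_inter_cons2]
    simp only [Finset.mem_singleton]
    constructor
    · rintro ⟨t, τ', rfl, h1, h2, hτ'⟩
      have ht : t = c := le_antisymm h2 h1
      rw [show (c :: List.replicate s c) = List.replicate (s+1) c from rfl] at hτ'
      rw [ih, Finset.mem_singleton] at hτ'
      rw [ht, hτ']
      rfl
    · rintro rfl
      refine ⟨c, List.replicate s c, rfl, le_refl c, le_refl c, ?_⟩
      rw [show (c :: List.replicate s c) = List.replicate (s+1) c from rfl, ih]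
      simp

lemma J0_replicate : ∀ (s c : ℕ), J0 s (List.replicate s c) = 1 := by
  intro s
  induction s with
  | zero => intro c; rfl
  | succ s ih =>
    intro c
    rw [J0_succ, inter_replicate c s, Finset.sum_singleton, ih]

lemma chain'_replicate_ge (n c : ℕ) : (List.replicate n c).Chain' (· ≥ ·) := by
  induction n with
  | zero => exact List.isChain_nil
  | succ n ih =>
    match n, ih with
    | 0, _ => exact List.isChain_singleton c
    | n+1, ih => exact List.isChain_cons_cons.mpr ⟨le_refl c, ih⟩

/-- final count for the rectangle -/
lemma J_rect (M N m : ℕ) (hm : N ≤ m) : J M N (List.replicate M m) = 2 ^ (M * N) := by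
  rw [core N M (List.replicate M m) (by simp) (chain'_replicate_ge M m)
    (fun a ha => by rw [List.eq_of_mem_replicate ha]; exact hm)]
  rw [List.map_replicate, J0_replicate, mul_one]



/-! ### glue layer: tableaux as functions -/

/-- decidable cell predicate for the Young diagram of a list shape (1-based rows) -/
def cellp (ν : List ℕ) (p : ℕ × ℕ) : Prop :=
  1 ≤ p.1 ∧ 1 ≤ p.2 ∧ p.2 ≤ ν.getD (p.1 - 1) 0

instance (ν : List ℕ) (p : ℕ × ℕ) : Decidable (cellp ν p) := by
  unfold cellp; infer_instance

/-- super tableaux of shape `ν` with `s` small and `B` big letters -/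
def SB (s B : ℕ) (ν : List ℕ) : Set ((ℕ × ℕ) → ℕ) :=
  {T | (∀ p, ¬ cellp ν p → T p = 0) ∧
    (∀ p, cellp ν p → 1 ≤ T p ∧ T p ≤ s + B) ∧
    (∀ p, cellp ν p → ∀ p', cellp ν p' → p.1 ≤ p'.1 → p.2 ≤ p'.2 → T p ≤ T p') ∧
    (∀ p, cellp ν p → cellp ν (p.1 + 1, p.2) → T p ≤ s → T p < T (p.1 + 1, p.2)) ∧
    (∀ p, cellp ν p → cellp ν (p.1, p.2 + 1) → s < T p → T p < T (p.1, p.2 + 1))}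

lemma getD_antitone {l : List ℕ} (h : l.Chain' (· ≥ ·)) {i j : ℕ} (hij : i ≤ j) :
    l.getD j 0 ≤ l.getD i 0 := by
  by_cases hj : j < l.length
  · have hi : i < l.length := lt_of_le_of_lt hij hj
    rw [List.getD_eq_getElem _ _ hj, List.getD_eq_getElem _ _ hi]
    rcases Nat.lt_or_ge i j with hlt | hge
    · exact (List.pairwise_iff_getElem.mp (List.isChain_iff_pairwise.mp h)) i j hi hj hlt
    · have : i = j := le_antisymm hij hge
      subst this; exact le_refl _
  · rw [List.getD_eq_default _ _ (not_lt.mp hj)]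
    exact Nat.zero_le _

lemma chain'_of_getD {l : List ℕ}
    (h : ∀ i, i + 1 < l.length → l.getD (i+1) 0 ≤ l.getD i 0) : l.Chain' (· ≥ ·) := by
  rw [List.Chain', List.isChain_iff_getElem]
  intro i hi
  have h1 : i + 1 < l.length := by omega
  have h0 : i < l.length := by omega
  have := h i h1
  rw [List.getD_eq_getElem _ _ h1, List.getD_eq_getElem _ _ h0] at this
  simpa [List.get_eq_getElem] using this

lemma getD_ofFn {n : ℕ} (f : Fin n → ℕ) {i : ℕ} (h : i < n) :
    (List.ofFn f).getD i 0 = f ⟨i, h⟩ := by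
  rw [List.getD_eq_getElem _ _ (by simpa using h), List.getElem_ofFn]

lemma getD_ofFn_ge {n : ℕ} (f : Fin n → ℕ) {i : ℕ} (h : n ≤ i) :
    (List.ofFn f).getD i 0 = 0 :=
  List.getD_eq_default _ _ (by simpa using h)

/-- pointwise characterization of membership in `vst` -/
lemma mem_vst_getD : ∀ {ν κ : List ℕ}, κ ∈ vst ν ↔
    (κ.length = ν.length ∧ ∀ i < ν.length,
      ν.getD i 0 - 1 ≤ κ.getD i 0 ∧ κ.getD i 0 ≤ ν.getD i 0) := by
  intro ν
  induction ν with
  | nil =>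
    intro κ
    rw [mem_vst_nil]
    constructor
    · rintro rfl; simp
    · rintro ⟨h, -⟩; exact List.length_eq_zero_iff.mp (by simpa using h)
  | cons x r ih =>
    intro κ
    rw [mem_vst_cons]
    constructor
    · rintro ⟨e, κ', rfl, h1, h2, hκ'⟩
      obtain ⟨hl, hb⟩ := ih.mp hκ'
      refine ⟨by simpa using hl, ?_⟩
      intro i hi
      cases i with
      | zero => simp only [List.getD_cons_zero]; exact ⟨h1, h2⟩
      | succ i =>
        simp only [List.getD_cons_succ]
        exact hb i (by simpa using hi)
    · rintro ⟨hl, hb⟩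
      match κ, hl with
      | e :: κ', hl =>
        have h0 := hb 0 (by simp)
        simp only [List.getD_cons_zero] at h0
        refine ⟨e, κ', rfl, h0.1, h0.2, ih.mpr ⟨by simpa using hl, ?_⟩⟩
        intro i hi
        have := hb (i+1) (by simpa using hi)
        simpa using this

/-- pointwise characterization of membership in `inter` -/
lemma mem_inter_getD : ∀ {ν τ : List ℕ}, τ ∈ inter ν ↔
    (τ.length = ν.length - 1 ∧ ∀ i, i + 1 < ν.length →
      (ν.getD (i+1) 0 ≤ τ.getD i 0 ∧ τ.getD i 0 ≤ ν.getD i 0)) := by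
  intro ν
  induction ν with
  | nil =>
    intro τ
    rw [mem_inter_nil]
    constructor
    · rintro rfl; simp
    · rintro ⟨h, -⟩; exact List.length_eq_zero_iff.mp (by simpa using h)
  | cons x r ih =>
    match r with
    | [] =>
      intro τ
      rw [mem_inter_single]
      constructor
      · rintro rfl; simp
      · rintro ⟨h, -⟩; exact List.length_eq_zero_iff.mp (by simpa using h)
    | y :: r' =>
      intro τ
      rw [mem_inter_cons2]
      constructor
      · rintro ⟨t, τ', rfl, h1, h2, hτ'⟩
        obtain ⟨hl, hb⟩ := ih.mp hτ'
        refine ⟨by simp only [List.length_cons] at hl ⊢; omega, ?_⟩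
        intro i hi
        cases i with
        | zero => simpa using ⟨h1, h2⟩
        | succ i =>
          simp only [List.getD_cons_succ]
          exact hb i (by simpa using hi)
      · rintro ⟨hl, hb⟩
        match τ, hl with
        | t :: τ', hl =>
          have h0 := hb 0 (by simp)
          simp only [List.getD_cons_zero, List.getD_cons_succ] at h0
          refine ⟨t, τ', rfl, h0.1, h0.2, ih.mpr ⟨by simp only [List.length_cons] at hl ⊢; omega, ?_⟩⟩
          intro i hi
          have := hb (i+1) (by simpa using hi)
          simpa using this

/-! ### ncard of finite disjoint unions -/

lemma ncard_finset_biUnion {α β : Type*} (F : Finset α) (f : α → Set β)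
    (hfin : ∀ a ∈ F, (f a).Finite)
    (hdisj : ∀ a ∈ F, ∀ b ∈ F, a ≠ b → Disjoint (f a) (f b)) :
    (⋃ a ∈ F, f a).Finite ∧ (⋃ a ∈ F, f a).ncard = ∑ a ∈ F, (f a).ncard := by
  classical
  induction F using Finset.induction_on with
  | empty => simp
  | @insert a F ha ih =>
    have hfinF : ∀ b ∈ F, (f b).Finite := fun b hb => hfin b (Finset.mem_insert_of_mem hb)
    have hdisjF : ∀ b ∈ F, ∀ c ∈ F, b ≠ c → Disjoint (f b) (f c) :=
      fun b hb c hc => hdisj b (Finset.mem_insert_of_mem hb) c (Finset.mem_insert_of_mem hc)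
    obtain ⟨hUfin, hUcard⟩ := ih hfinF hdisjF
    have hseteq : (⋃ x ∈ (insert a F : Finset α), f x) = f a ∪ ⋃ x ∈ F, f x :=
      Finset.set_biUnion_insert a F f
    have hfa : (f a).Finite := hfin a (Finset.mem_insert_self a F)
    have hdisjaU : Disjoint (f a) (⋃ x ∈ F, f x) := by
      rw [Set.disjoint_iUnion₂_right]
      intro b hb
      exact hdisj a (Finset.mem_insert_self a F) b (Finset.mem_insert_of_mem hb)
        (fun h => ha (h ▸ hb))
    constructor
    · rw [hseteq]; exact hfa.union hUfin
    · rw [hseteq, Set.ncard_union_eq hdisjaU hfa hUfin, hUcard,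
        Finset.sum_insert ha]

/-- generic decomposition principle -/
lemma decomp (S : Set ((ℕ×ℕ)→ℕ)) (F : Finset (List ℕ)) (Sub : List ℕ → Set ((ℕ×ℕ)→ℕ))
    (k : ((ℕ×ℕ)→ℕ) → List ℕ) (ψ : List ℕ → ((ℕ×ℕ)→ℕ) → ((ℕ×ℕ)→ℕ))
    (φ : ((ℕ×ℕ)→ℕ) → ((ℕ×ℕ)→ℕ))
    (h1 : ∀ T ∈ S, k T ∈ F) (h2 : ∀ T ∈ S, φ T ∈ Sub (k T)) (h3 : ∀ T ∈ S, ψ (k T) (φ T) = T)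
    (h4 : ∀ κ ∈ F, ∀ T' ∈ Sub κ, ψ κ T' ∈ S ∧ k (ψ κ T') = κ ∧ φ (ψ κ T') = T')
    (hfin : ∀ κ ∈ F, (Sub κ).Finite) :
    S.Finite ∧ S.ncard = ∑ κ ∈ F, (Sub κ).ncard := by
  have hSeq : S = ⋃ κ ∈ F, (ψ κ) '' (Sub κ) := by
    ext T
    simp only [Set.mem_iUnion, Set.mem_image]
    constructor
    · intro hT
      exact ⟨k T, h1 T hT, φ T, h2 T hT, h3 T hT⟩
    · rintro ⟨κ, hκ, T', hT', rfl⟩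
      exact (h4 κ hκ T' hT').1
  have hpiece : ∀ κ ∈ F, ((ψ κ) '' (Sub κ)).Finite ∧ ((ψ κ) '' (Sub κ)).ncard = (Sub κ).ncard := by
    intro κ hκ
    refine ⟨(hfin κ hκ).image _, Set.ncard_image_of_injOn ?_⟩
    intro T1 h1' T2 h2' heq
    have e1 := (h4 κ hκ T1 h1').2.2
    have e2 := (h4 κ hκ T2 h2').2.2
    rw [← e1, ← e2, heq]
  have hdisj : ∀ a ∈ F, ∀ b ∈ F, a ≠ b → Disjoint ((ψ a) '' (Sub a)) ((ψ b) '' (Sub b)) := by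
    intro a hha b hhb hab
    rw [Set.disjoint_left]
    rintro T ⟨T1, hT1, rfl⟩ ⟨T2, hT2, hT2eq⟩
    have e1 := (h4 a hha T1 hT1).2.1
    have e2 := (h4 b hhb T2 hT2).2.1
    exact hab (by rw [← e1, ← e2, hT2eq])
  obtain ⟨hf, hc⟩ := ncard_finset_biUnion F (fun κ => (ψ κ) '' (Sub κ))
    (fun a ha => (hpiece a ha).1) hdisj
  rw [hSeq]
  exact ⟨hf, by rw [hc]; exact Finset.sum_congr rfl (fun a ha => (hpiece a ha).2)⟩



/-! ### peeling the largest big value -/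

def bigK (s B : ℕ) (ν : List ℕ) (T : (ℕ×ℕ)→ℕ) : List ℕ :=
  List.ofFn (fun i : Fin ν.length =>
    if T (i.1+1, ν.getD i.1 0) = s + B + 1 then ν.getD i.1 0 - 1 else ν.getD i.1 0)

lemma bigK_getD {s B : ℕ} {ν : List ℕ} {T : (ℕ×ℕ)→ℕ} {i : ℕ} (hi : i < ν.length) :
    (bigK s B ν T).getD i 0
      = if T (i+1, ν.getD i 0) = s+B+1 then ν.getD i 0 - 1 else ν.getD i 0 := by
  rw [bigK, getD_ofFn _ hi]

lemma bigK_length {s B : ℕ} {ν : List ℕ} {T : (ℕ×ℕ)→ℕ} :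
    (bigK s B ν T).length = ν.length := by simp [bigK]

def peel (v : ℕ) (T : (ℕ×ℕ)→ℕ) : (ℕ×ℕ)→ℕ := fun p => if T p = v then 0 else T p

def unpeel (v : ℕ) (ν κ : List ℕ) (T' : (ℕ×ℕ)→ℕ) : (ℕ×ℕ)→ℕ :=
  fun p => if cellp ν p ∧ ¬ cellp κ p then v else T' p

lemma vst_le_all {ν κ : List ℕ} (h : κ ∈ vst ν) (i : ℕ) :
    ν.getD i 0 - 1 ≤ κ.getD i 0 ∧ κ.getD i 0 ≤ ν.getD i 0 := by
  obtain ⟨hl, hb⟩ := mem_vst_getD.mp h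
  by_cases hi : i < ν.length
  · exact hb i hi
  · rw [List.getD_eq_default _ _ (not_lt.mp hi),
      List.getD_eq_default _ _ (by omega)]
    omega

lemma cellp_k_lt_len {ν : List ℕ} {k l : ℕ} (h : cellp ν (k, l)) : k - 1 < ν.length := by
  by_contra hc
  have := List.getD_eq_default ν 0 (not_lt.mp hc)
  obtain ⟨h1, h2, h3⟩ := h
  simp only at h3
  omega

lemma big_endrow {s B : ℕ} {ν : List ℕ} {T : (ℕ×ℕ)→ℕ} (hT : T ∈ SB s (B+1) ν)
    {k l : ℕ} (hp : cellp ν (k, l)) (hv : T (k, l) = s + B + 1) :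
    l = ν.getD (k-1) 0 := by
  obtain ⟨hz, hbd, hmono, h4, h5⟩ := hT
  by_contra hne
  obtain ⟨h1, h2, h3⟩ := hp
  simp only at h3
  have hlt : l < ν.getD (k-1) 0 := lt_of_le_of_ne h3 hne
  have hq : cellp ν (k, l+1) := by
    refine ⟨h1, by omega, ?_⟩
    show l + 1 ≤ ν.getD (k - 1) 0
    omega
  have hs := h5 (k, l) ⟨h1, h2, h3⟩ hq (by rw [hv]; omega)
  have hb := (hbd (k, l+1) hq).2
  simp only at hs
  omega

lemma big_notcell {s B : ℕ} {ν : List ℕ} {T : (ℕ×ℕ)→ℕ} (hT : T ∈ SB s (B+1) ν) {p : ℕ×ℕ} :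
    (cellp ν p ∧ ¬ cellp (bigK s B ν T) p) ↔ (cellp ν p ∧ T p = s+B+1) := by
  obtain ⟨k, l⟩ := p
  constructor
  · rintro ⟨hpν, hpκ⟩
    refine ⟨hpν, ?_⟩
    obtain ⟨h1, h2, h3⟩ := hpν
    simp only at h3
    have hnle : ¬ (l ≤ (bigK s B ν T).getD (k-1) 0) := fun h => hpκ ⟨h1, h2, h⟩
    have hkl : k - 1 < ν.length := cellp_k_lt_len ⟨h1, h2, h3⟩
    rw [bigK_getD hkl] at hnle
    have hk1 : k - 1 + 1 = k := by omega
    rw [hk1] at hnle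
    by_cases hc : T (k, ν.getD (k-1) 0) = s+B+1
    · rw [if_pos hc] at hnle
      have hle : l = ν.getD (k-1) 0 := by omega
      rw [hle]; exact hc
    · rw [if_neg hc] at hnle
      omega
  · rintro ⟨hpν, hv⟩
    refine ⟨hpν, ?_⟩
    have hl : l = ν.getD (k-1) 0 := big_endrow hT hpν hv
    have hkl : k - 1 < ν.length := cellp_k_lt_len hpν
    rintro ⟨-, h2, hcell⟩
    simp only at hcell
    rw [bigK_getD hkl] at hcell
    have hk1 : k - 1 + 1 = k := by obtain ⟨hk, -, -⟩ := hpν; omega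
    rw [hk1, ← hl, hv, if_pos rfl] at hcell
    omega

lemma big_K_mem {s B : ℕ} {ν : List ℕ} (hν : ν.Chain' (· ≥ ·)) {T : (ℕ×ℕ)→ℕ}
    (hT : T ∈ SB s (B+1) ν) :
    bigK s B ν T ∈ (vst ν).filter (fun l => l.Chain' (· ≥ ·)) := by
  rw [Finset.mem_filter]
  constructor
  · rw [mem_vst_getD]
    refine ⟨bigK_length, ?_⟩
    intro i hi
    rw [bigK_getD hi]
    split <;> omega
  · apply chain'_of_getD
    intro i hi
    rw [bigK_length] at hi
    have hi0 : i < ν.length := by omega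
    rw [bigK_getD hi, bigK_getD hi0]
    have hmono : ν.getD (i+1) 0 ≤ ν.getD i 0 := getD_antitone hν (Nat.le_succ i)
    by_cases hc1 : T (i+1, ν.getD i 0) = s+B+1
    · by_cases hc2 : T (i+1+1, ν.getD (i+1) 0) = s+B+1
      · rw [if_pos hc1, if_pos hc2]; omega
      · rw [if_pos hc1, if_neg hc2]
        by_contra hcon
        have heq : ν.getD (i+1) 0 = ν.getD i 0 := by omega
        have hpos : 1 ≤ ν.getD i 0 := by omega
        obtain ⟨hz, hbd, hmono', h4, h5⟩ := hT
        have hq1 : cellp ν (i+1, ν.getD i 0) := by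
          refine ⟨by omega, hpos, ?_⟩
          show ν.getD i 0 ≤ ν.getD i 0
          exact le_refl _
        have hq2 : cellp ν (i+2, ν.getD i 0) := by
          refine ⟨by omega, hpos, ?_⟩
          show ν.getD i 0 ≤ ν.getD (i+2-1) 0
          have : i + 2 - 1 = i + 1 := by omega
          rw [this, heq]
        have hle := hmono' (i+1, ν.getD i 0) hq1 (i+2, ν.getD i 0) hq2 (by omega) (le_refl _)
        have hub := (hbd (i+2, ν.getD i 0) hq2).2
        rw [show i+1+1 = i+2 from rfl, heq] at hc2
        omega
    · rw [if_neg hc1]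
      split <;> omega

lemma cellp_sub_of_vst {ν κ : List ℕ} (h : κ ∈ vst ν) {p : ℕ×ℕ} (hp : cellp κ p) :
    cellp ν p := by
  obtain ⟨h1, h2, h3⟩ := hp
  refine ⟨h1, h2, le_trans h3 (vst_le_all h _).2⟩

lemma big_phi_mem {s B : ℕ} {ν : List ℕ} {T : (ℕ×ℕ)→ℕ} (hT : T ∈ SB s (B+1) ν) :
    peel (s+B+1) T ∈ SB s B (bigK s B ν T) := by
  have hKmem : bigK s B ν T ∈ vst ν := by
    rw [mem_vst_getD]
    refine ⟨bigK_length, ?_⟩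
    intro i hi
    rw [bigK_getD hi]
    split <;> omega
  obtain ⟨hz, hbd, hmono, h4, h5⟩ := hT
  have hTfull : T ∈ SB s (B+1) ν := ⟨hz, hbd, hmono, h4, h5⟩
  have hval : ∀ p, cellp (bigK s B ν T) p → peel (s+B+1) T p = T p ∧ T p ≠ s+B+1 := by
    intro p hp
    have hpν : cellp ν p := cellp_sub_of_vst hKmem hp
    have hne : T p ≠ s+B+1 := by
      intro hv
      exact ((big_notcell hTfull).mpr ⟨hpν, hv⟩).2 hp
    exact ⟨by rw [peel, if_neg hne], hne⟩
  refine ⟨?_, ?_, ?_, ?_, ?_⟩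
  · intro p hp
    by_cases hpν : cellp ν p
    · have := ((big_notcell hTfull).mp ⟨hpν, hp⟩).2
      rw [peel, if_pos this]
    · rw [peel, hz p hpν]
      split <;> rfl
  · intro p hp
    obtain ⟨heq, hne⟩ := hval p hp
    rw [heq]
    have := hbd p (cellp_sub_of_vst hKmem hp)
    omega
  · intro p hp p' hp' h1 h2
    rw [(hval p hp).1, (hval p' hp').1]
    exact hmono p (cellp_sub_of_vst hKmem hp) p' (cellp_sub_of_vst hKmem hp') h1 h2
  · intro p hp hq hle
    have e1 := (hval p hp).1
    have e2 := (hval _ hq).1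
    rw [e1] at hle
    rw [e1, e2]
    exact h4 p (cellp_sub_of_vst hKmem hp) (cellp_sub_of_vst hKmem hq) hle
  · intro p hp hq hgt
    have e1 := (hval p hp).1
    have e2 := (hval _ hq).1
    rw [e1] at hgt
    rw [e1, e2]
    exact h5 p (cellp_sub_of_vst hKmem hp) (cellp_sub_of_vst hKmem hq) hgt

lemma big_psi_mem {s B : ℕ} {ν : List ℕ} (hν : ν.Chain' (· ≥ ·)) {κ : List ℕ}
    (hκ : κ ∈ vst ν) (hκc : κ.Chain' (· ≥ ·)) {T' : (ℕ×ℕ)→ℕ} (hT' : T' ∈ SB s B κ) :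
    unpeel (s+B+1) ν κ T' ∈ SB s (B+1) ν := by
  obtain ⟨hz, hbd, hmono, h4, h5⟩ := hT'
  have hpeel_shape : ∀ k l, cellp ν (k, l) → ¬ cellp κ (k, l) →
      κ.getD (k-1) 0 = ν.getD (k-1) 0 - 1 ∧ l = ν.getD (k-1) 0 ∧ 1 ≤ ν.getD (k-1) 0 := by
    intro k l hpν hpκ
    obtain ⟨h1, h2, h3⟩ := hpν
    simp only at h3
    have hbnd := vst_le_all hκ (k-1)
    have hnotin : ¬ (l ≤ κ.getD (k-1) 0) := fun h => hpκ ⟨h1, h2, h⟩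
    omega
  refine ⟨?_, ?_, ?_, ?_, ?_⟩
  · intro p hp
    rw [unpeel, if_neg (fun h => hp h.1)]
    exact hz p (fun h => hp (cellp_sub_of_vst hκ h))
  · intro p hp
    rw [unpeel]
    split
    · omega
    · next hcond =>
      have hpκ : cellp κ p := by
        by_contra hc
        exact hcond ⟨hp, hc⟩
      have := hbd p hpκ
      omega
  · intro p hp p' hp' hle1 hle2
    obtain ⟨k, l⟩ := p
    obtain ⟨k', l'⟩ := p'
    rw [unpeel, unpeel]
    simp only at hle1 hle2
    split
    · next hcond =>
      split
      · omega
      · next hcond' =>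
        exfalso
        have hpκ' : cellp κ (k', l') := by
          by_contra hc
          exact hcond' ⟨hp', hc⟩
        obtain ⟨hA, hB, hC⟩ := hpeel_shape k l hp hcond.2
        obtain ⟨h1', h2', h3'⟩ := hpκ'
        simp only at h3'
        have hκanti : κ.getD (k'-1) 0 ≤ κ.getD (k-1) 0 :=
          getD_antitone hκc (by omega)
        omega
    · next hcond =>
      have hpκ : cellp κ (k, l) := by
        by_contra hc
        exact hcond ⟨hp, hc⟩
      split
      · have := hbd (k, l) hpκ
        omega
      · next hcond' =>
        have hpκ' : cellp κ (k', l') := by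
          by_contra hc
          exact hcond' ⟨hp', hc⟩
        exact hmono (k, l) hpκ (k', l') hpκ' hle1 hle2
  · intro p hp hq hle
    obtain ⟨k, l⟩ := p
    rw [unpeel] at hle ⊢
    rw [unpeel]
    have hple : ¬ (cellp ν (k, l) ∧ ¬ cellp κ (k, l)) := by
      intro hcond
      rw [if_pos hcond] at hle
      omega
    rw [if_neg hple] at hle ⊢
    have hpκ : cellp κ (k, l) := by
      by_contra hc
      exact hple ⟨hp, hc⟩
    split
    · have := hbd (k, l) hpκ
      omega
    · next hcond' =>
      have hqκ : cellp κ (k+1, l) := by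
        by_contra hc
        exact hcond' ⟨hq, hc⟩
      exact h4 (k, l) hpκ hqκ hle
  · intro p hp hq hgt
    obtain ⟨k, l⟩ := p
    rw [unpeel] at hgt ⊢
    rw [unpeel]
    by_cases hcond : cellp ν (k, l) ∧ ¬ cellp κ (k, l)
    · exfalso
      obtain ⟨hA, hB, hC⟩ := hpeel_shape k l hp hcond.2
      obtain ⟨-, -, hq3⟩ := hq
      simp only at hq3
      omega
    · rw [if_neg hcond] at hgt ⊢
      have hpκ : cellp κ (k, l) := by
        by_contra hc
        exact hcond ⟨hp, hc⟩
      split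
      · have := hbd (k, l) hpκ
        omega
      · next hcond' =>
        have hqκ : cellp κ (k, l+1) := by
          by_contra hc
          exact hcond' ⟨hq, hc⟩
        exact h5 (k, l) hpκ hqκ hgt



lemma list_ext_getD {l1 l2 : List ℕ} (hlen : l1.length = l2.length)
    (h : ∀ i < l1.length, l1.getD i 0 = l2.getD i 0) : l1 = l2 := by
  apply List.ext_getElem hlen
  intro i h1 h2
  have := h i h1
  rw [List.getD_eq_getElem _ _ h1, List.getD_eq_getElem _ _ h2] at this
  exact this

lemma big_roundtrip1 {s B : ℕ} {ν : List ℕ} {T : (ℕ×ℕ)→ℕ} (hT : T ∈ SB s (B+1) ν) :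
    unpeel (s+B+1) ν (bigK s B ν T) (peel (s+B+1) T) = T := by
  funext p
  rw [unpeel]
  by_cases hcond : cellp ν p ∧ ¬ cellp (bigK s B ν T) p
  · rw [if_pos hcond]
    exact (((big_notcell hT).mp hcond).2).symm
  · rw [if_neg hcond, peel]
    by_cases hpν : cellp ν p
    · have hpκ : cellp (bigK s B ν T) p := by
        by_contra hc
        exact hcond ⟨hpν, hc⟩
      have hne : T p ≠ s+B+1 := fun hv => ((big_notcell hT).mpr ⟨hpν, hv⟩).2 hpκ
      rw [if_neg hne]
    · have h0 := hT.1 p hpν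
      rw [h0]
      split <;> rfl

lemma big_roundtrip2a {s B : ℕ} {ν κ : List ℕ} {T' : (ℕ×ℕ)→ℕ}
    (hT' : T' ∈ SB s B κ) :
    peel (s+B+1) (unpeel (s+B+1) ν κ T') = T' := by
  funext p
  by_cases hcond : cellp ν p ∧ ¬ cellp κ p
  · have hU : unpeel (s+B+1) ν κ T' p = s+B+1 := by rw [unpeel, if_pos hcond]
    rw [peel, hU, if_pos rfl]
    exact (hT'.1 p hcond.2).symm
  · have hU : unpeel (s+B+1) ν κ T' p = T' p := by rw [unpeel, if_neg hcond]
    rw [peel, hU]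
    have hne : T' p ≠ s+B+1 := by
      by_cases hpκ : cellp κ p
      · have := hT'.2.1 p hpκ
        omega
      · rw [hT'.1 p hpκ]
        omega
    rw [if_neg hne]

lemma big_roundtrip2b {s B : ℕ} {ν κ : List ℕ} (hκ : κ ∈ vst ν) {T' : (ℕ×ℕ)→ℕ}
    (hT' : T' ∈ SB s B κ) :
    bigK s B ν (unpeel (s+B+1) ν κ T') = κ := by
  have hlen : κ.length = ν.length := (mem_vst_getD.mp hκ).1
  apply list_ext_getD (by rw [bigK_length, hlen])
  intro i hi
  rw [bigK_length] at hi
  rw [bigK_getD hi]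
  have hb := vst_le_all hκ i
  by_cases hκi : κ.getD i 0 = ν.getD i 0
  · have hne : unpeel (s+B+1) ν κ T' (i+1, ν.getD i 0) ≠ s+B+1 := by
      by_cases hν0 : 1 ≤ ν.getD i 0
      · have hcell : cellp κ (i+1, ν.getD i 0) := by
          refine ⟨by omega, hν0, ?_⟩
          show ν.getD i 0 ≤ κ.getD i 0
          omega
        have hEq : unpeel (s+B+1) ν κ T' (i+1, ν.getD i 0) = T' (i+1, ν.getD i 0) := by
          rw [unpeel, if_neg (fun h => h.2 hcell)]
        rw [hEq]
        have := hT'.2.1 _ hcell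
        omega
      · have hnν : ¬ cellp ν (i+1, ν.getD i 0) := by
          rintro ⟨-, h2, -⟩
          omega
        have hnκ : ¬ cellp κ (i+1, ν.getD i 0) := fun h => hnν (cellp_sub_of_vst hκ h)
        have hEq : unpeel (s+B+1) ν κ T' (i+1, ν.getD i 0) = T' (i+1, ν.getD i 0) := by
          rw [unpeel, if_neg (fun h => hnν h.1)]
        rw [hEq, hT'.1 _ hnκ]
        omega
    rw [if_neg hne, hκi]
  · have hν1 : 1 ≤ ν.getD i 0 := by omega
    have hcellν : cellp ν (i+1, ν.getD i 0) := by
      refine ⟨by omega, hν1, ?_⟩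
      show ν.getD i 0 ≤ ν.getD i 0
      exact le_refl _
    have hncκ : ¬ cellp κ (i+1, ν.getD i 0) := by
      rintro ⟨-, -, h3⟩
      have h3' : ν.getD i 0 ≤ κ.getD i 0 := h3
      omega
    have hU : unpeel (s+B+1) ν κ T' (i+1, ν.getD i 0) = s+B+1 := by
      rw [unpeel, if_pos ⟨hcellν, hncκ⟩]
    rw [if_pos hU]
    omega



/-! ### peeling the largest small value -/

def smallK (s : ℕ) (ν : List ℕ) (T : (ℕ×ℕ)→ℕ) : List ℕ :=
  List.ofFn (fun i : Fin (ν.length - 1) =>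
    ((Finset.Icc 1 (ν.getD i.1 0)).filter (fun l => T (i.1+1, l) ≤ s)).card)

lemma smallK_getD {s : ℕ} {ν : List ℕ} {T : (ℕ×ℕ)→ℕ} {i : ℕ} (hi : i < ν.length - 1) :
    (smallK s ν T).getD i 0
      = ((Finset.Icc 1 (ν.getD i 0)).filter (fun l => T (i+1, l) ≤ s)).card := by
  rw [smallK, getD_ofFn _ hi]

lemma smallK_length {s : ℕ} {ν : List ℕ} {T : (ℕ×ℕ)→ℕ} :
    (smallK s ν T).length = ν.length - 1 := by simp [smallK]

lemma filter_Icc_down {n : ℕ} {P : ℕ → Prop} [DecidablePred P]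
    (hdc : ∀ a b, 1 ≤ a → a ≤ b → b ≤ n → P b → P a) :
    (Finset.Icc 1 n).filter P = Finset.Icc 1 (((Finset.Icc 1 n).filter P).card) := by
  ext m
  constructor
  · intro hm
    obtain ⟨hmI, hmP⟩ := Finset.mem_filter.mp hm
    rw [Finset.mem_Icc] at hmI
    have h1 : Finset.Icc 1 m ⊆ (Finset.Icc 1 n).filter P := by
      intro a ha
      rw [Finset.mem_Icc] at ha
      exact Finset.mem_filter.mpr ⟨Finset.mem_Icc.mpr ⟨ha.1, le_trans ha.2 hmI.2⟩,
        hdc a m ha.1 ha.2 hmI.2 hmP⟩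
    have hc := Finset.card_le_card h1
    rw [Nat.card_Icc] at hc
    rw [Finset.mem_Icc]
    omega
  · intro hm
    rw [Finset.mem_Icc] at hm
    by_contra hmF
    have hsub : (Finset.Icc 1 n).filter P ⊆ Finset.Icc 1 (m-1) := by
      intro b hb
      obtain ⟨hbI, hbP⟩ := Finset.mem_filter.mp hb
      rw [Finset.mem_Icc] at hbI
      rw [Finset.mem_Icc]
      refine ⟨hbI.1, ?_⟩
      by_contra hble
      exact hmF (Finset.mem_filter.mpr ⟨Finset.mem_Icc.mpr ⟨hm.1, by omega⟩,
        hdc m b hm.1 (by omega) hbI.2 hbP⟩)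
    have hc := Finset.card_le_card hsub
    rw [Nat.card_Icc] at hc
    omega

lemma small_rowge {s : ℕ} {ν : List ℕ} (hν : ν.Chain' (· ≥ ·)) {T : (ℕ×ℕ)→ℕ}
    (hT : T ∈ SB (s+1) 0 ν) : ∀ k l, cellp ν (k, l) → k ≤ T (k, l) := by
  intro k
  induction k with
  | zero => intro l _; omega
  | succ k ih =>
    intro l hp
    rcases Nat.eq_zero_or_pos k with rfl | hk
    · exact (hT.2.1 _ hp).1
    · have hpk : cellp ν (k, l) := by
        refine ⟨by omega, hp.2.1, ?_⟩
        refine le_trans hp.2.2 ?_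
        exact getD_antitone hν (by omega)
      have hb := (hT.2.1 _ hpk).2
      have hstrict := hT.2.2.2.1 (k, l) hpk hp (by omega)
      have ihk := ih l hpk
      simp only at hstrict
      omega

lemma smallK_iff {s : ℕ} {ν : List ℕ} {T : (ℕ×ℕ)→ℕ} (hT : T ∈ SB (s+1) 0 ν)
    {i : ℕ} (hi : i < ν.length - 1) {l : ℕ} (hl : 1 ≤ l) (hlν : l ≤ ν.getD i 0) :
    (l ≤ (smallK s ν T).getD i 0 ↔ T (i+1, l) ≤ s) := by
  have hdc : ∀ a b, 1 ≤ a → a ≤ b → b ≤ ν.getD i 0 → T (i+1, b) ≤ s → T (i+1, a) ≤ s := by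
    intro a b ha hab hb hPb
    have hca : cellp ν (i+1, a) := by
      refine ⟨by omega, ha, ?_⟩
      show a ≤ ν.getD i 0
      omega
    have hcb : cellp ν (i+1, b) := by
      refine ⟨by omega, by omega, ?_⟩
      show b ≤ ν.getD i 0
      omega
    have := hT.2.2.1 (i+1, a) hca (i+1, b) hcb (le_refl _) hab
    omega
  have hIcc := filter_Icc_down hdc
  rw [smallK_getD hi]
  constructor
  · intro hle
    have hmem : l ∈ (Finset.Icc 1 (ν.getD i 0)).filter (fun l => T (i+1, l) ≤ s) := by
      rw [hIcc, Finset.mem_Icc]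
      exact ⟨hl, hle⟩
    exact (Finset.mem_filter.mp hmem).2
  · intro hP
    have hmem : l ∈ (Finset.Icc 1 (ν.getD i 0)).filter (fun l => T (i+1, l) ≤ s) :=
      Finset.mem_filter.mpr ⟨Finset.mem_Icc.mpr ⟨hl, hlν⟩, hP⟩
    rw [hIcc, Finset.mem_Icc] at hmem
    exact hmem.2

lemma small_notcell {s : ℕ} {ν : List ℕ} (hν : ν.Chain' (· ≥ ·)) (hlen : ν.length = s+1)
    {T : (ℕ×ℕ)→ℕ} (hT : T ∈ SB (s+1) 0 ν) {p : ℕ×ℕ} :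
    (cellp ν p ∧ ¬ cellp (smallK s ν T) p) ↔ (cellp ν p ∧ T p = s+1) := by
  obtain ⟨k, l⟩ := p
  constructor
  · rintro ⟨hpν, hpκ⟩
    refine ⟨hpν, ?_⟩
    obtain ⟨h1, h2, h3⟩ := hpν
    simp only at h1 h2 h3
    have hub := (hT.2.1 (k, l) ⟨h1, h2, h3⟩).2
    by_cases hklast : k - 1 < ν.length - 1
    · have hnle : ¬ (l ≤ (smallK s ν T).getD (k-1) 0) := fun h => hpκ ⟨h1, h2, h⟩
      have hiff := smallK_iff hT hklast h2 h3
      have hk1 : k - 1 + 1 = k := by omega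
      rw [hk1] at hiff
      have : ¬ (T (k, l) ≤ s) := fun h => hnle (hiff.mpr h)
      omega
    · -- last row
      have hklt : k - 1 < ν.length := cellp_k_lt_len ⟨h1, h2, h3⟩
      have hkeq : k = s + 1 := by omega
      have hge := small_rowge hν hT k l ⟨h1, h2, h3⟩
      omega
  · rintro ⟨hpν, hv⟩
    refine ⟨hpν, ?_⟩
    obtain ⟨h1, h2, h3⟩ := hpν
    simp only at h1 h2 h3
    rintro ⟨-, -, hcell⟩
    simp only at hcell
    by_cases hklast : k - 1 < ν.length - 1
    · have hiff := smallK_iff hT hklast h2 h3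
      have hk1 : k - 1 + 1 = k := by omega
      rw [hk1] at hiff
      have := hiff.mp hcell
      omega
    · have : (smallK s ν T).getD (k-1) 0 = 0 :=
        List.getD_eq_default _ _ (by rw [smallK_length]; omega)
      omega

lemma small_K_mem {s : ℕ} {ν : List ℕ} (hν : ν.Chain' (· ≥ ·)) {T : (ℕ×ℕ)→ℕ}
    (hT : T ∈ SB (s+1) 0 ν) :
    smallK s ν T ∈ inter ν := by
  rw [mem_inter_getD]
  refine ⟨smallK_length, ?_⟩
  intro i hi
  have hi' : i < ν.length - 1 := by omega
  rw [smallK_getD hi']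
  constructor
  · -- ν.getD (i+1) 0 ≤ card
    have hsub : Finset.Icc 1 (ν.getD (i+1) 0) ⊆
        (Finset.Icc 1 (ν.getD i 0)).filter (fun l => T (i+1, l) ≤ s) := by
      intro l hlI
      rw [Finset.mem_Icc] at hlI
      have hcb : cellp ν (i+2, l) := by
        refine ⟨by omega, hlI.1, ?_⟩
        show l ≤ ν.getD (i+2-1) 0
        have : i + 2 - 1 = i + 1 := by omega
        rw [this]
        exact hlI.2
      have hca : cellp ν (i+1, l) := by
        refine ⟨by omega, hlI.1, ?_⟩
        show l ≤ ν.getD i 0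
        have hb2 := hcb.2.2
        simp only at hb2
        have hanti : ν.getD (i+2-1) 0 ≤ ν.getD i 0 := getD_antitone hν (by omega)
        omega
      have hstrict := hT.2.2.2.1 (i+1, l) hca hcb (by have := (hT.2.1 _ hca).2; omega)
      have hub := (hT.2.1 _ hcb).2
      simp only at hstrict hub
      rw [Finset.mem_filter, Finset.mem_Icc]
      refine ⟨⟨hlI.1, hca.2.2⟩, ?_⟩
      have e2 : T (i+1+1, l) = T (i+2, l) := rfl
      omega
    have := Finset.card_le_card hsub
    rw [Nat.card_Icc] at this
    omega
  · calc ((Finset.Icc 1 (ν.getD i 0)).filter (fun l => T (i+1, l) ≤ s)).card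
        ≤ (Finset.Icc 1 (ν.getD i 0)).card := Finset.card_filter_le _ _
      _ = ν.getD i 0 := by rw [Nat.card_Icc]; omega



lemma smallK_le {s : ℕ} {ν : List ℕ} {T : (ℕ×ℕ)→ℕ} (i : ℕ) :
    (smallK s ν T).getD i 0 ≤ ν.getD i 0 := by
  by_cases hi : i < ν.length - 1
  · rw [smallK_getD hi]
    calc ((Finset.Icc 1 (ν.getD i 0)).filter (fun l => T (i+1, l) ≤ s)).card
        ≤ (Finset.Icc 1 (ν.getD i 0)).card := Finset.card_filter_le _ _
      _ = ν.getD i 0 := by rw [Nat.card_Icc]; omega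
  · rw [List.getD_eq_default _ _ (by rw [smallK_length]; omega)]
    omega

lemma cellp_sub_smallK {s : ℕ} {ν : List ℕ} {T : (ℕ×ℕ)→ℕ} {p : ℕ×ℕ}
    (hp : cellp (smallK s ν T) p) : cellp ν p := by
  obtain ⟨h1, h2, h3⟩ := hp
  exact ⟨h1, h2, le_trans h3 (smallK_le _)⟩

lemma inter_le_all {ν τ : List ℕ} (h : τ ∈ inter ν) (i : ℕ) : τ.getD i 0 ≤ ν.getD i 0 := by
  obtain ⟨hl, hb⟩ := mem_inter_getD.mp h
  by_cases hi : i < τ.length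
  · exact (hb i (by omega)).2
  · rw [List.getD_eq_default _ _ (by omega)]
    omega

lemma inter_ge_all {ν τ : List ℕ} (h : τ ∈ inter ν) {i : ℕ} (hi : i + 1 < ν.length) :
    ν.getD (i+1) 0 ≤ τ.getD i 0 :=
  ((mem_inter_getD.mp h).2 i hi).1

lemma cellp_sub_of_inter {ν τ : List ℕ} (h : τ ∈ inter ν) {p : ℕ×ℕ} (hp : cellp τ p) :
    cellp ν p := by
  obtain ⟨h1, h2, h3⟩ := hp
  exact ⟨h1, h2, le_trans h3 (inter_le_all h _)⟩

lemma small_phi_mem {s : ℕ} {ν : List ℕ} (hν : ν.Chain' (· ≥ ·)) (hlen : ν.length = s+1)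
    {T : (ℕ×ℕ)→ℕ} (hT : T ∈ SB (s+1) 0 ν) :
    peel (s+1) T ∈ SB s 0 (smallK s ν T) := by
  have hval : ∀ p, cellp (smallK s ν T) p → peel (s+1) T p = T p ∧ T p ≤ s := by
    rintro ⟨k, l⟩ hp
    have hkl : k - 1 < (smallK s ν T).length := cellp_k_lt_len hp
    rw [smallK_length] at hkl
    obtain ⟨h1, h2, h3⟩ := hp
    simp only at h1 h2 h3
    have hlν : l ≤ ν.getD (k-1) 0 := le_trans h3 (smallK_le _)
    have hiff := smallK_iff hT hkl h2 hlν
    have hk1 : k - 1 + 1 = k := by omega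
    rw [hk1] at hiff
    have hTle : T (k, l) ≤ s := hiff.mp h3
    exact ⟨by rw [peel, if_neg (by omega)], hTle⟩
  obtain ⟨hz, hbd, hmono, h4, h5⟩ := hT
  have hTfull : T ∈ SB (s+1) 0 ν := ⟨hz, hbd, hmono, h4, h5⟩
  refine ⟨?_, ?_, ?_, ?_, ?_⟩
  · intro p hp
    by_cases hpν : cellp ν p
    · have := ((small_notcell hν hlen hTfull).mp ⟨hpν, hp⟩).2
      rw [peel, if_pos this]
    · rw [peel, hz p hpν]
      split <;> rfl
  · intro p hp
    obtain ⟨heq, hle⟩ := hval p hp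
    rw [heq]
    have := (hbd p (cellp_sub_smallK hp)).1
    omega
  · intro p hp p' hp' hle1 hle2
    rw [(hval p hp).1, (hval p' hp').1]
    exact hmono p (cellp_sub_smallK hp) p' (cellp_sub_smallK hp') hle1 hle2
  · intro p hp hq hle
    have e1 := (hval p hp).1
    have e2 := (hval _ hq).1
    rw [e1] at hle
    rw [e1, e2]
    exact h4 p (cellp_sub_smallK hp) (cellp_sub_smallK hq) (by omega)
  · intro p hp hq hgt
    rw [(hval p hp).1] at hgt
    have := (hval p hp).2
    omega

lemma small_psi_mem {s : ℕ} {ν : List ℕ} (hν : ν.Chain' (· ≥ ·)) {τ : List ℕ}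
    (hτ : τ ∈ inter ν) {T' : (ℕ×ℕ)→ℕ} (hT' : T' ∈ SB s 0 τ) :
    unpeel (s+1) ν τ T' ∈ SB (s+1) 0 ν := by
  have hτc : τ.Chain' (· ≥ ·) := chain'_of_mem_inter hτ
  obtain ⟨hz, hbd, hmono, h4, h5⟩ := hT'
  refine ⟨?_, ?_, ?_, ?_, ?_⟩
  · intro p hp
    rw [unpeel, if_neg (fun h => hp h.1)]
    exact hz p (fun h => hp (cellp_sub_of_inter hτ h))
  · intro p hp
    rw [unpeel]
    split
    · omega
    · next hcond =>
      have hpτ : cellp τ p := by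
        by_contra hc
        exact hcond ⟨hp, hc⟩
      have := hbd p hpτ
      omega
  · intro p hp p' hp' hle1 hle2
    obtain ⟨k, l⟩ := p
    obtain ⟨k', l'⟩ := p'
    rw [unpeel, unpeel]
    simp only at hle1 hle2
    split
    · next hcond =>
      split
      · omega
      · next hcond' =>
        exfalso
        have hpτ' : cellp τ (k', l') := by
          by_contra hc
          exact hcond' ⟨hp', hc⟩
        obtain ⟨h1', h2', h3'⟩ := hpτ'
        simp only at h3'
        have hnotin : ¬ (l ≤ τ.getD (k-1) 0) := fun h => hcond.2 ⟨hp.1, hp.2.1, h⟩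
        have hanti : τ.getD (k'-1) 0 ≤ τ.getD (k-1) 0 := getD_antitone hτc (by omega)
        omega
    · next hcond =>
      have hpτ : cellp τ (k, l) := by
        by_contra hc
        exact hcond ⟨hp, hc⟩
      split
      · have := hbd (k, l) hpτ
        omega
      · next hcond' =>
        have hpτ' : cellp τ (k', l') := by
          by_contra hc
          exact hcond' ⟨hp', hc⟩
        exact hmono (k, l) hpτ (k', l') hpτ' hle1 hle2
  · intro p hp hq hle
    obtain ⟨k, l⟩ := p
    rw [unpeel] at hle ⊢
    rw [unpeel]
    by_cases hcond : cellp ν (k, l) ∧ ¬ cellp τ (k, l)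
    · exfalso
      obtain ⟨hq1, hq2, hq3⟩ := hq
      simp only at hq1 hq2 hq3
      have hk : k + 1 - 1 = k := by omega
      rw [hk] at hq3
      have hklen : k < ν.length := by
        by_contra hcc
        rw [List.getD_eq_default _ _ (by omega)] at hq3
        omega
      have hk1 : 1 ≤ k := hp.1
      have hge : ν.getD (k-1+1) 0 ≤ τ.getD (k-1) 0 := inter_ge_all hτ (by omega)
      have hk2 : k - 1 + 1 = k := by omega
      rw [hk2] at hge
      have hnotin : ¬ (l ≤ τ.getD (k-1) 0) := fun h => hcond.2 ⟨hp.1, hp.2.1, h⟩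
      omega
    · rw [if_neg hcond] at hle ⊢
      have hpτ : cellp τ (k, l) := by
        by_contra hc
        exact hcond ⟨hp, hc⟩
      split
      · have := hbd (k, l) hpτ
        omega
      · next hcond' =>
        have hqτ : cellp τ (k+1, l) := by
          by_contra hc
          exact hcond' ⟨hq, hc⟩
        have := hbd (k, l) hpτ
        exact h4 (k, l) hpτ hqτ (by omega)
  · intro p hp hq hgt
    rw [unpeel] at hgt
    exfalso
    by_cases hcond : cellp ν p ∧ ¬ cellp τ p
    · rw [if_pos hcond] at hgt
      omega
    · rw [if_neg hcond] at hgt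
      have hpτ : cellp τ p := by
        by_contra hc
        exact hcond ⟨hp, hc⟩
      have := hbd p hpτ
      omega

lemma small_roundtrip1 {s : ℕ} {ν : List ℕ} (hν : ν.Chain' (· ≥ ·)) (hlen : ν.length = s+1)
    {T : (ℕ×ℕ)→ℕ} (hT : T ∈ SB (s+1) 0 ν) :
    unpeel (s+1) ν (smallK s ν T) (peel (s+1) T) = T := by
  funext p
  rw [unpeel]
  by_cases hcond : cellp ν p ∧ ¬ cellp (smallK s ν T) p
  · rw [if_pos hcond]
    exact (((small_notcell hν hlen hT).mp hcond).2).symm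
  · rw [if_neg hcond, peel]
    by_cases hpν : cellp ν p
    · have hpκ : cellp (smallK s ν T) p := by
        by_contra hc
        exact hcond ⟨hpν, hc⟩
      have hne : T p ≠ s+1 := fun hv => ((small_notcell hν hlen hT).mpr ⟨hpν, hv⟩).2 hpκ
      rw [if_neg hne]
    · have h0 := hT.1 p hpν
      rw [h0]
      split <;> rfl

lemma small_roundtrip2b {s : ℕ} {ν : List ℕ} (hν : ν.Chain' (· ≥ ·)) {τ : List ℕ}
    (hτ : τ ∈ inter ν) {T' : (ℕ×ℕ)→ℕ} (hT' : T' ∈ SB s 0 τ) :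
    smallK s ν (unpeel (s+1) ν τ T') = τ := by
  have hlen : τ.length = ν.length - 1 := length_of_mem_inter hτ
  apply list_ext_getD (by rw [smallK_length, hlen])
  intro i hi
  rw [smallK_length] at hi
  rw [smallK_getD hi]
  have hfe : (Finset.Icc 1 (ν.getD i 0)).filter (fun l => unpeel (s+1) ν τ T' (i+1, l) ≤ s)
      = Finset.Icc 1 (τ.getD i 0) := by
    ext l
    rw [Finset.mem_filter, Finset.mem_Icc, Finset.mem_Icc]
    constructor
    · rintro ⟨⟨hl1, hl2⟩, hU⟩
      refine ⟨hl1, ?_⟩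
      have hcellν : cellp ν (i+1, l) := by
        refine ⟨by omega, hl1, ?_⟩
        show l ≤ ν.getD i 0
        omega
      by_cases hcellτ : cellp τ (i+1, l)
      · have h3 := hcellτ.2.2
        simp only at h3
        exact h3
      · rw [unpeel, if_pos ⟨hcellν, hcellτ⟩] at hU
        omega
    · rintro ⟨hl1, hl2⟩
      have hlν : l ≤ ν.getD i 0 := le_trans hl2 (inter_le_all hτ i)
      have hcellτ : cellp τ (i+1, l) := by
        refine ⟨by omega, hl1, ?_⟩
        show l ≤ τ.getD i 0
        omega
      refine ⟨⟨hl1, hlν⟩, ?_⟩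
      rw [unpeel, if_neg (fun h => h.2 hcellτ)]
      have := hT'.2.1 _ hcellτ
      omega
  rw [hfe, Nat.card_Icc]
  omega

/-! ### the main counting theorem for tableaux -/

theorem SB_count : ∀ (B s : ℕ) (ν : List ℕ), ν.Chain' (· ≥ ·) → ν.length = s →
    (SB s B ν).Finite ∧ (SB s B ν).ncard = J s B ν := by
  intro B
  induction B with
  | zero =>
    intro s
    induction s with
    | zero =>
      intro ν hν hlen
      rw [List.length_eq_zero_iff] at hlen
      subst hlen
      have hcell : ∀ p : ℕ×ℕ, ¬ cellp [] p := by
        rintro ⟨k, l⟩ ⟨h1, h2, h3⟩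
        simp only [List.getD] at h3
        simp at h3
        omega
      have hset : SB 0 0 [] = {(fun _ => 0 : (ℕ×ℕ)→ℕ)} := by
        ext T
        simp only [Set.mem_singleton_iff, SB, Set.mem_setOf_eq]
        constructor
        · rintro ⟨hz, -⟩
          funext p
          exact hz p (hcell p)
        · rintro rfl
          exact ⟨fun p _ => rfl, fun p hp => absurd hp (hcell p),
            fun p hp => absurd hp (hcell p), fun p hp => absurd hp (hcell p),
            fun p hp => absurd hp (hcell p)⟩
      rw [hset]
      exact ⟨Set.finite_singleton _, by rw [Set.ncard_singleton]; rfl⟩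
    | succ s ihs =>
      intro ν hν hlen
      obtain ⟨hf, hc⟩ := decomp (SB (s+1) 0 ν) (inter ν) (SB s 0)
        (smallK s ν) (unpeel (s+1) ν) (peel (s+1))
        (fun T hT => small_K_mem hν hT)
        (fun T hT => small_phi_mem hν hlen hT)
        (fun T hT => small_roundtrip1 hν hlen hT)
        (fun τ hτ T' hT' => ⟨small_psi_mem hν hτ hT',
          small_roundtrip2b hν hτ hT', big_roundtrip2a hT'⟩)
        (fun τ hτ => (ihs τ (chain'_of_mem_inter hτ)
          (by rw [length_of_mem_inter hτ, hlen]; omega)).1)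
      refine ⟨hf, ?_⟩
      rw [hc, J_zero, J0_succ]
      refine Finset.sum_congr rfl fun τ hτ => ?_
      exact (ihs τ (chain'_of_mem_inter hτ)
        (by rw [length_of_mem_inter hτ, hlen]; omega)).2
  | succ B ihB =>
    intro s ν hν hlen
    obtain ⟨hf, hc⟩ := decomp (SB s (B+1) ν) ((vst ν).filter (fun l => l.Chain' (· ≥ ·)))
      (SB s B) (bigK s B ν) (unpeel (s+B+1) ν) (peel (s+B+1))
      (fun T hT => big_K_mem hν hT)
      (fun T hT => big_phi_mem hT)
      (fun T hT => big_roundtrip1 hT)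
      (fun κ hκ T' hT' => by
        rw [Finset.mem_filter] at hκ
        exact ⟨big_psi_mem hν hκ.1 hκ.2 hT', big_roundtrip2b hκ.1 hT',
          big_roundtrip2a hT'⟩)
      (fun κ hκ => by
        rw [Finset.mem_filter] at hκ
        exact (ihB s κ hκ.2 (by rw [length_of_mem_vst hκ.1, hlen])).1)
    refine ⟨hf, ?_⟩
    rw [hc, J_succ]
    refine Finset.sum_congr rfl fun κ hκ => ?_
    rw [Finset.mem_filter] at hκ
    exact (ihB s κ hκ.2 (by rw [length_of_mem_vst hκ.1, hlen])).2



/-! ### final statement -/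

lemma getD_replicate {M m i : ℕ} : (List.replicate M m).getD i 0 = if i < M then m else 0 := by
  by_cases hi : i < M
  · rw [if_pos hi, List.getD_eq_getElem _ _ (by simpa using hi), List.getElem_replicate]
  · rw [if_neg hi, List.getD_eq_default _ _ (by simpa using hi)]



lemma Yp_eq (M N m : ℕ) : Yp M N (wt M m) = {p | cellp (List.replicate M m) p} := by
  ext ⟨k, l⟩
  simp only [Yp, wt, Set.mem_setOf_eq, cellp]
  constructor
  · rintro ⟨h1, h2, h3 | h3⟩
    · refine ⟨h1, h2, ?_⟩
      show l ≤ (List.replicate M m).getD (k-1) 0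
      rw [getD_replicate, if_pos (by omega)]
      rw [if_pos ⟨h1, h3.1⟩] at h3
      exact h3.2
    · exfalso
      obtain ⟨hk, hl, hbound⟩ := h3
      rw [if_neg (by omega)] at hbound
      omega
  · rintro ⟨h1, h2, h3⟩
    rw [getD_replicate] at h3
    by_cases hk : k - 1 < M
    · rw [if_pos hk] at h3
      exact ⟨h1, h2, Or.inl ⟨by omega, by rw [if_pos ⟨h1, by omega⟩]; exact h3⟩⟩
    · rw [if_neg hk] at h3
      omega

lemma Bpos_eq (M N m : ℕ) : Bpos M N (wt M m) = SB M N (List.replicate M m) := by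
  unfold Bpos SB
  rw [Yp_eq]
  rfl

/-- for `m ≥ N`, the number of tableaux of rectangular shape `mϖ_M`
(`M` rows, `m` columns) equals `2^{MN}`. -/
theorem statement4 (M N : ℕ) (hM : 1 ≤ M) (hN : 1 ≤ N) (m : ℕ) (hm : N ≤ m) :
    (Bpos M N (wt M m)).Finite ∧ (Bpos M N (wt M m)).ncard = 2 ^ (M * N) := by
  rw [Bpos_eq M N m]
  obtain ⟨hf, hc⟩ := SB_count N M (List.replicate M m) (chain'_replicate_ge M m) (by simp)
  exact ⟨hf, by rw [hc, J_rect M N m hm]⟩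

end QAS
end

section
/- For an ℓ-weight f = ((f_j(z))_{j∈I}; s) and i ∈ I set C_i(f)(z) := ∏_{j=i}^{κ} f_j(zθ_j)^{(ε_j,ε_j)} ∈ ℂ(z), and set t_1 := θ_1 and t_i := τ_{i−1}²q⁻² for i > 1. Then for all i, l ∈ I and a ∈ ℂˣ: C_i(⬜l_a) = (q(1−zaq⁻¹)/(1−zaq))^δ and C_i(⬜l*_a) = (q⁻¹(1−zat_iq)/(1−zat_iq⁻¹))^δ, where δ = 1 if i ≤ l and δ = 0 otherwise. -/
open scoped Classical

noncomputable section

namespace QAS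

/-- ℓ-weights: an `I`-tuple (indexed by `ℕ`, only indices `1,…,M+N` are relevant) of
rational functions together with a parity in `ℤ/2`.  The group law is componentwise
multiplication of rational functions and addition of parities. -/
abbrev LW : Type := (ℕ → RatFunc ℂ) × Multiplicative (ZMod 2)

/-- the variable `z` -/
def Z : RatFunc ℂ := RatFunc.X

/-- constant rational functions -/
def Cc (c : ℂ) : RatFunc ℂ := RatFunc.C c

/-- parity `|ε_j|` (indices are 1-based) -/
def par (M : ℕ) (j : ℕ) : ZMod 2 := if j ≤ M then 0 else 1

/-- `q_j` -/
def qq (M : ℕ) (q : ℂ) (j : ℕ) : ℂ := if j ≤ M then q else q⁻¹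

/-- `(ε_j, ε_j) = ±1` -/
def sgn (M : ℕ) (j : ℕ) : ℤ := if j ≤ M then 1 else -1

/-- `q̂_i` -/
def qhat (M : ℕ) (q : ℂ) (i : ℕ) : ℂ := if i = M then q⁻¹ else qq M q i

/-- `τ_i` -/
def tau (M N : ℕ) (q : ℂ) (i : ℕ) : ℂ :=
  if i ≤ M then q ^ ((M : ℤ) - N + 1 - i) else q ^ ((i : ℤ) - M + 1 - N)

/-- `θ_j` -/
def theta (M N : ℕ) (q : ℂ) (j : ℕ) : ℂ :=
  if j ≤ M then q ^ (2 * ((M : ℤ) - N + 1 - j)) else q ^ (2 * ((j : ℤ) - M - N))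

/-- `(ε_k, ε_l)` -/
def epsPair (M : ℕ) (k l : ℕ) : ℤ := if k = l then sgn M k else 0

/-- `(α_i, α_j)` where `α_i = ε_i - ε_{i+1}` -/
def alphaPair (M : ℕ) (i j : ℕ) : ℤ :=
  epsPair M i j - epsPair M i (j + 1) - epsPair M (i + 1) j + epsPair M (i + 1) (j + 1)

/-- the set of `j ∈ I₀` with `j ∼ i`, i.e. `|i - j| = 1` -/
def nbr (M N : ℕ) (i : ℕ) : Finset ℕ :=
  (Finset.Icc 1 (M + N - 1)).filter fun j => j + 1 = i ∨ j = i + 1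

/-- the ℓ-weight `⬜j_a` -/
def box (M N : ℕ) (q : ℂ) (j : ℕ) (a : ℂ) : LW :=
  (fun k => if k = j then
      Cc (qq M q j) * (1 - Cc (a * (theta M N q j)⁻¹ * (qq M q j)⁻¹) * Z) /
        (1 - Cc (a * (theta M N q j)⁻¹ * qq M q j) * Z)
    else 1,
   Multiplicative.ofAdd (par M j))

/-- the generalized simple root `A_{i,a}` -/
def Amat (M N : ℕ) (q : ℂ) (i : ℕ) (a : ℂ) : LW :=
  (fun k =>
    if k = i then
      Cc (qq M q i) *
        (1 - Cc (a * tau M N q i * q⁻¹ * (theta M N q i)⁻¹ * (qq M q i)⁻¹) * Z) /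
        (1 - Cc (a * tau M N q i * q⁻¹ * (theta M N q i)⁻¹ * qq M q i) * Z)
    else if k = i + 1 then
      Cc (qq M q (i + 1))⁻¹ *
        (1 - Cc (a * tau M N q i * q⁻¹ * (theta M N q i)⁻¹ * qq M q i * qq M q (i + 1) ^ 2) * Z) /
        (1 - Cc (a * tau M N q i * q⁻¹ * (theta M N q i)⁻¹ * qq M q i) * Z)
    else 1,
   Multiplicative.ofAdd (par M i + par M (i + 1)))

/-- the prefundamental ℓ-weight `Ψ_{i,a}` -/
def Psi (M N : ℕ) (q : ℂ) (i : ℕ) (a : ℂ) : LW :=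
  (fun k =>
    if i ≤ M then (if 1 ≤ k ∧ k ≤ i then 1 - Cc (a * (tau M N q i)⁻¹) * Z else 1)
    else (if i < k ∧ k ≤ M + N then (1 - Cc (a * (tau M N q i)⁻¹) * Z)⁻¹ else 1),
   1)

/-- the ℓ-weight `[a]_i` -/
def bra (M N : ℕ) (i : ℕ) (a : ℂ) : LW :=
  (fun k =>
    if i ≤ M then (if 1 ≤ k ∧ k ≤ i then Cc a else 1)
    else (if i < k ∧ k ≤ M + N then Cc a⁻¹ else 1),
   1)

/-- the ℓ-weight `𝔴^{(i)}_{c,a} = [c]_i Ψ_{i,ac⁻²} Ψ_{i,a}⁻¹` -/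
def wAsym (M N : ℕ) (q : ℂ) (i : ℕ) (c a : ℂ) : LW :=
  bra M N i c * Psi M N q i (a * (c ^ 2)⁻¹) * (Psi M N q i a)⁻¹

/-- the ℓ-weight `𝔫^{(i)}_{c,a}` -/
def nAsym (M N : ℕ) (q : ℂ) (i : ℕ) (c a : ℂ) : LW :=
  wAsym M N q i (qhat M q i) (a * qhat M q i ^ 2) *
    ∏ j ∈ nbr M N i, wAsym M N q j ((c ^ alphaPair M i j)⁻¹) (a * q ^ alphaPair M i j)

/-- a scalar rational function viewed as an ℓ-weight (all relevant components equal to it,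
parity `0̄`) -/
def scalarLW (M N : ℕ) (h : RatFunc ℂ) : LW :=
  (fun k => if 1 ≤ k ∧ k ≤ M + N then h else 1, 1)

/-- equivalence of ℓ-weights: `f ≡ g` iff `f g⁻¹ = ((h p_1, …, h p_κ); s)` with `h`
regular and nonvanishing at `z = 0` and `p_k ∈ ℂˣ` -/
def lequiv (M N : ℕ) (f g : LW) : Prop :=
  ∃ h : RatFunc ℂ, Polynomial.eval 0 h.denom ≠ 0 ∧ Polynomial.eval 0 h.num ≠ 0 ∧
    ∃ p : ℕ → ℂ, ∀ k, 1 ≤ k → k ≤ M + N → p k ≠ 0 ∧ f.1 k * (g.1 k)⁻¹ = h * Cc (p k)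

/-- substitution `z ↦ cz` in a rational function -/
def scaleVar (c : ℂ) (f : RatFunc ℂ) : RatFunc ℂ :=
  Polynomial.eval₂ (RatFunc.C : ℂ →+* RatFunc ℂ) (Cc c * Z) f.num /
    Polynomial.eval₂ (RatFunc.C : ℂ →+* RatFunc ℂ) (Cc c * Z) f.denom

/-- `C_i(f)(z) = ∏_{j=i}^{κ} f_j(zθ_j)^{(ε_j,ε_j)}` -/
def CFun (M N : ℕ) (q : ℂ) (i : ℕ) (f : LW) : RatFunc ℂ :=
  ∏ j ∈ Finset.Icc i (M + N), scaleVar (theta M N q j) (f.1 j) ^ sgn M j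

/-- `t_1 = θ_1` and `t_i = τ_{i-1}² q⁻²` for `i > 1` -/
def tSmall (M N : ℕ) (q : ℂ) (i : ℕ) : ℂ :=
  if i = 1 then theta M N q 1 else tau M N q (i - 1) ^ 2 * (q ^ 2)⁻¹

/-- the ℓ-weights `⬜j*_a`, defined by `⬜1*_a = (⬜1_{aθ_1})⁻¹` and
`⬜(i+1)*_a = ⬜i*_a · A_{i, aτ_i q⁻¹}` -/
def boxStar (M N : ℕ) (q : ℂ) : ℕ → ℂ → LW
  | 0, _ => 1
  | 1, a => (box M N q 1 (a * theta M N q 1))⁻¹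
  | i + 2, a => boxStar M N q (i + 1) a * Amat M N q (i + 1) (a * tau M N q (i + 1) * q⁻¹)

/-- auxiliary downwards recursion for `⬜j′_a`; the argument is `κ - j` -/
def boxPrimeAux (M N : ℕ) (q : ℂ) (a : ℂ) : ℕ → LW
  | 0 => (box M N q (M + N) a)⁻¹
  | d + 1 => boxPrimeAux M N q a d *
      (Amat M N q (M + N - (d + 1)) (a * tau M N q (M + N - (d + 1)) * q⁻¹))⁻¹

/-- the ℓ-weights `⬜j′_a`, defined by `⬜κ′_a = (⬜κ_a)⁻¹` and
`⬜(i+1)′_a = ⬜i′_a · A_{i, aτ_i q⁻¹}` -/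
def boxPrime (M N : ℕ) (q : ℂ) (j : ℕ) (a : ℂ) : LW := boxPrimeAux M N q a (M + N - j)

/-- `q^λ` as an ℓ-weight, for `λ ∈ ℤ^I` -/
def qpow (M N : ℕ) (q : ℂ) (lam : ℕ → ℤ) : LW :=
  (fun k => if 1 ≤ k ∧ k ≤ M + N then Cc (q ^ (lam k * sgn M k)) else 1,
   Multiplicative.ofAdd
     (((∑ k ∈ Finset.Icc 1 (M + N), if k ≤ M then (0 : ℤ) else lam k) : ZMod 2)))

/-- the fundamental weight `ϖ_i` for `i ≤ M` -/
def varpi (i : ℕ) : ℕ → ℤ := fun k => if 1 ≤ k ∧ k ≤ i then 1 else 0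

/-- `Y_{i,a}` for `i ≤ M` -/
def YLW (M N : ℕ) (q : ℂ) (i : ℕ) (a : ℂ) : LW :=
  qpow M N q (varpi i) * Psi M N q i (a * (qq M q i)⁻¹) * (Psi M N q i (a * qq M q i))⁻¹

/-- `ϖ^{(i)}_{m,a}` for `i ≤ M` -/
def varpiLW (M N : ℕ) (q : ℂ) (i m : ℕ) (a : ℂ) : LW :=
  qpow M N q (fun k => (m : ℤ) * varpi i k) *
    Psi M N q i (a * qq M q i ^ (1 - 2 * (m : ℤ))) * (Psi M N q i (a * qq M q i))⁻¹

/-- the submonoid `ℒ𝒬⁻` generated by the `A_{j,b}⁻¹` -/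
def LQneg (M N : ℕ) (q : ℂ) : Submonoid LW :=
  Submonoid.closure
    {w | ∃ j : ℕ, ∃ b : ℂ, 1 ≤ j ∧ j ≤ M + N - 1 ∧ b ≠ 0 ∧ w = (Amat M N q j b)⁻¹}

/-- `m_T = ∏_{k=1}^{i} ∏_{l=1}^{m} ⬜T(-k,-l)_{aτ_i q^{2(k-l)}}` for `T ∈ ℬ₋(mϖ_i)` -/
def mTab (M N : ℕ) (q : ℂ) (i m : ℕ) (a : ℂ) (T : ℤ × ℤ → ℕ) : LW :=
  ∏ k ∈ Finset.Icc 1 i, ∏ l ∈ Finset.Icc 1 m,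
    box M N q (T (-(k : ℤ), -(l : ℤ))) (a * tau M N q i * q ^ (2 * ((k : ℤ) - l)))

/-- the highest tableau `H ∈ ℬ₋(mϖ_i)`, `H(-k,-l) = i + 1 - k` -/
def Htab (i m : ℕ) : ℤ × ℤ → ℕ := fun p =>
  if 1 ≤ -p.1 ∧ -p.1 ≤ (i : ℤ) ∧ 1 ≤ -p.2 ∧ -p.2 ≤ (m : ℤ) then i + 1 - (-p.1).toNat else 0

/-- `m_T = ∏_{(i,j) ∈ Y₋^λ} ⬜T(i,j)_{aq^{2(j-i)+1}}` for `T ∈ ℬ₋(λ)`, written as a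
product over a bounding rectangle of the Young diagram -/
def mTgen (M N : ℕ) (q : ℂ) (lam : ℕ → ℕ) (a : ℂ) (T : ℤ × ℤ → ℕ) : LW :=
  ∏ k ∈ Finset.Icc 1 (M + lam (M + 1)), ∏ l ∈ Finset.Icc 1 (max (lam 1) N),
    if (k, l) ∈ Yp M N lam then
      box M N q (T (-(k : ℤ), -(l : ℤ))) (a * q ^ (2 * ((k : ℤ) - l) + 1))
    else 1

/-- the normalization factor `f^{(i)}_{c,a}(z)` -/
def fRF (M N : ℕ) (q : ℂ) (i : ℕ) (c a : ℂ) : RatFunc ℂ :=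
  if i ≤ M then 1 - Cc (a * q ^ ((M : ℤ) - N - i - 1)) * Z
  else (1 - Cc (a * (c ^ 2)⁻¹ * q ^ ((M : ℤ) + N - i - 1)) * Z) *
      (1 - Cc (a * q ^ ((i : ℤ) - M - N - 1)) * Z) /
      (1 - Cc (a * q ^ ((M : ℤ) + N - i - 1)) * Z)


/-! ### Auxiliary lemmas for Statement 5 -/

/-- `1 - Cc b * Z` -/
def F (b : ℂ) : RatFunc ℂ := 1 - Cc b * Z

lemma Cc_ne_zero {c : ℂ} (hc : c ≠ 0) : Cc c ≠ 0 := by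
  simpa [Cc] using (map_ne_zero_iff _ (RingHom.injective (RatFunc.C : ℂ →+* RatFunc ℂ))).mpr hc

lemma Cc_inv (c : ℂ) : (Cc c)⁻¹ = Cc c⁻¹ := by
  simp [Cc, map_inv₀]

lemma F_eq (b : ℂ) : F b = algebraMap (Polynomial ℂ) (RatFunc ℂ) (1 - Polynomial.C b * Polynomial.X) := by
  simp [F, Cc, Z, map_sub, map_mul, RatFunc.algebraMap_C, RatFunc.algebraMap_X]

lemma F_ne (b : ℂ) : F b ≠ 0 := by
  rw [F_eq]
  intro h
  have h2 : (1 - Polynomial.C b * Polynomial.X) = 0 :=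
    (map_eq_zero_iff _ (IsFractionRing.injective (Polynomial ℂ) (RatFunc ℂ))).mp h
  have := congrArg (Polynomial.eval 0) h2
  simp at this

/-- substitution `z ↦ cz` as a ring hom on polynomials -/
def phi (c : ℂ) : Polynomial ℂ →+* RatFunc ℂ := Polynomial.eval₂RingHom RatFunc.C (Cc c * Z)

lemma phi_eq (c : ℂ) (p : Polynomial ℂ) :
    phi c p = algebraMap (Polynomial ℂ) (RatFunc ℂ) (p.comp (Polynomial.C c * Polynomial.X)) := by
  have h1 : (algebraMap (Polynomial ℂ) (RatFunc ℂ)).comp Polynomial.C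
      = (RatFunc.C : ℂ →+* RatFunc ℂ) := by
    ext x
    simp [RatFunc.algebraMap_C]
  have h2 : algebraMap (Polynomial ℂ) (RatFunc ℂ) (Polynomial.C c * Polynomial.X)
      = Cc c * Z := by
    simp [Cc, Z, map_mul, RatFunc.algebraMap_C, RatFunc.algebraMap_X]
  rw [Polynomial.comp, Polynomial.hom_eval₂, h1, h2]
  rfl

lemma phi_ne {c : ℂ} (hc : c ≠ 0) {p : Polynomial ℂ} (hp : p ≠ 0) : phi c p ≠ 0 := by
  rw [phi_eq]
  intro h
  have h2 := (map_eq_zero_iff _ (IsFractionRing.injective (Polynomial ℂ) (RatFunc ℂ))).mp h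
  rw [Polynomial.comp_eq_zero_iff] at h2
  rcases h2 with h2 | ⟨-, h3⟩
  · exact hp h2
  · have := congrArg (fun r => Polynomial.coeff r 1) h3
    simp [Polynomial.coeff_C] at this
    exact hc this

lemma phi_mem {c : ℂ} (hc : c ≠ 0) :
    nonZeroDivisors (Polynomial ℂ) ≤ (nonZeroDivisors (RatFunc ℂ)).comap (phi c) := by
  intro p hp
  simp only [Submonoid.mem_comap]
  exact mem_nonZeroDivisors_iff_ne_zero.mpr
    (phi_ne hc (mem_nonZeroDivisors_iff_ne_zero.mp hp))

lemma scaleVar_eq {c : ℂ} (hc : c ≠ 0) (f : RatFunc ℂ) :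
    scaleVar c f = RatFunc.liftRingHom (phi c) (phi_mem hc) f := by
  conv_rhs => rw [← RatFunc.num_div_denom f]
  rw [RatFunc.liftRingHom_apply_div]
  rfl

lemma scaleVar_mul {c : ℂ} (hc : c ≠ 0) (f g : RatFunc ℂ) :
    scaleVar c (f * g) = scaleVar c f * scaleVar c g := by
  rw [scaleVar_eq hc, scaleVar_eq hc, scaleVar_eq hc, map_mul]

lemma scaleVar_inv {c : ℂ} (hc : c ≠ 0) (f : RatFunc ℂ) :
    scaleVar c f⁻¹ = (scaleVar c f)⁻¹ := by
  rw [scaleVar_eq hc, scaleVar_eq hc, map_inv₀]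

lemma scaleVar_div {c : ℂ} (hc : c ≠ 0) (f g : RatFunc ℂ) :
    scaleVar c (f / g) = scaleVar c f / scaleVar c g := by
  rw [scaleVar_eq hc, scaleVar_eq hc, scaleVar_eq hc, map_div₀]

lemma scaleVar_one {c : ℂ} (hc : c ≠ 0) : scaleVar c 1 = 1 := by
  rw [scaleVar_eq hc, map_one]

lemma scaleVar_algebraMap {c : ℂ} (hc : c ≠ 0) (p : Polynomial ℂ) :
    scaleVar c (algebraMap (Polynomial ℂ) (RatFunc ℂ) p) = phi c p := by
  rw [scaleVar_eq hc]
  conv_lhs => rw [show algebraMap (Polynomial ℂ) (RatFunc ℂ) p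
    = algebraMap (Polynomial ℂ) (RatFunc ℂ) p / algebraMap (Polynomial ℂ) (RatFunc ℂ) 1 by
      simp]
  rw [RatFunc.liftRingHom_apply_div]
  simp

lemma scaleVar_Cc {c : ℂ} (hc : c ≠ 0) (x : ℂ) : scaleVar c (Cc x) = Cc x := by
  have : Cc x = algebraMap (Polynomial ℂ) (RatFunc ℂ) (Polynomial.C x) := by
    simp [Cc, RatFunc.algebraMap_C]
  rw [this, scaleVar_algebraMap hc, phi_eq]
  simp [RatFunc.algebraMap_C]

lemma scaleVar_F {c : ℂ} (hc : c ≠ 0) (b : ℂ) : scaleVar c (F b) = F (b * c) := by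
  rw [F_eq, scaleVar_algebraMap hc, phi_eq, F_eq]
  congr 1
  simp [Polynomial.sub_comp, Polynomial.mul_comp, Polynomial.C_comp, Polynomial.X_comp,
    Polynomial.C_mul, mul_assoc]

lemma key_inv {u b d : ℂ} (hu : u ≠ 0) : (Cc u * F b / F d)⁻¹ = Cc u⁻¹ * F d / F b := by
  rw [← Cc_inv]
  field_simp [F_ne, Cc_ne_zero hu]

lemma key_ne {u b d : ℂ} (hu : u ≠ 0) : Cc u * F b / F d ≠ 0 :=
  div_ne_zero (mul_ne_zero (Cc_ne_zero hu) (F_ne b)) (F_ne d)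

lemma scaleVar_CFF {c : ℂ} (hc : c ≠ 0) (u b d : ℂ) :
    scaleVar c (Cc u * F b / F d) = Cc u * F (b * c) / F (d * c) := by
  rw [scaleVar_div hc, scaleVar_mul hc, scaleVar_Cc hc, scaleVar_F hc, scaleVar_F hc]

lemma theta_ne {M N : ℕ} {q : ℂ} (hq : q ≠ 0) (j : ℕ) : theta M N q j ≠ 0 := by
  unfold theta
  split <;> exact zpow_ne_zero _ hq

lemma theta_succ_lt {M N : ℕ} {q : ℂ} (hq : q ≠ 0) {k : ℕ} (h : k < M) :
    theta M N q (k + 1) = theta M N q k * (q ^ 2)⁻¹ := by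
  unfold theta
  rw [if_pos (by omega : k + 1 ≤ M), if_pos (by omega : k ≤ M)]
  rw [show ((q : ℂ) ^ 2)⁻¹ = q ^ (-2 : ℤ) by rw [zpow_neg]; norm_cast, ← zpow_add₀ hq]
  congr 1
  push_cast
  ring

lemma theta_succ_M {M N : ℕ} {q : ℂ} (hq : q ≠ 0) :
    theta M N q (M + 1) = theta M N q M := by
  unfold theta
  rw [if_neg (by omega : ¬ M + 1 ≤ M), if_pos (le_refl M)]
  congr 1
  push_cast
  ring

lemma theta_succ_gt {M N : ℕ} {q : ℂ} (hq : q ≠ 0) {k : ℕ} (h : M < k) :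
    theta M N q (k + 1) = theta M N q k * q ^ 2 := by
  unfold theta
  rw [if_neg (by omega : ¬ k + 1 ≤ M), if_neg (by omega : ¬ k ≤ M)]
  rw [show (q : ℂ) ^ 2 = q ^ (2 : ℤ) by norm_cast, ← zpow_add₀ hq]
  congr 1
  push_cast
  ring

lemma box_term {M N : ℕ} {q : ℂ} (hq : q ≠ 0) (l : ℕ) (a : ℂ) :
    scaleVar (theta M N q l) ((box M N q l a).1 l) ^ sgn M l
      = Cc q * F (a * q⁻¹) / F (a * q) := by
  have ht : theta M N q l ≠ 0 := theta_ne hq l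
  by_cases hl : l ≤ M
  · have h1 : (box M N q l a).1 l
        = Cc q * F (a * (theta M N q l)⁻¹ * q⁻¹) / F (a * (theta M N q l)⁻¹ * q) := by
      simp [box, F, qq, hl]
    rw [h1, scaleVar_CFF ht, show sgn M l = 1 from if_pos hl, zpow_one,
      show a * (theta M N q l)⁻¹ * q⁻¹ * theta M N q l = a * q⁻¹ by field_simp; try ring,
      show a * (theta M N q l)⁻¹ * q * theta M N q l = a * q by field_simp; try ring]
  · have h1 : (box M N q l a).1 l
        = Cc q⁻¹ * F (a * (theta M N q l)⁻¹ * q⁻¹⁻¹) / F (a * (theta M N q l)⁻¹ * q⁻¹) := by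
      simp [box, F, qq, hl]
    rw [h1, scaleVar_CFF ht, show sgn M l = -1 from if_neg hl, zpow_neg, zpow_one,
      show a * (theta M N q l)⁻¹ * q⁻¹⁻¹ * theta M N q l = a * q by field_simp; try ring,
      show a * (theta M N q l)⁻¹ * q⁻¹ * theta M N q l = a * q⁻¹ by field_simp; try ring,
      key_inv (inv_ne_zero hq), inv_inv]

lemma Amat_term1 {M N : ℕ} {q : ℂ} (hq : q ≠ 0) (k : ℕ) (b : ℂ) :
    scaleVar (theta M N q k) ((Amat M N q k b).1 k) ^ sgn M k
      = Cc q * F (b * tau M N q k * q⁻¹ * q⁻¹) / F (b * tau M N q k) := by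
  have ht : theta M N q k ≠ 0 := theta_ne hq k
  set t := tau M N q k with hT
  clear_value t
  by_cases hk : k ≤ M
  · have h1 : (Amat M N q k b).1 k
        = Cc q * F (b * t * q⁻¹ * (theta M N q k)⁻¹ * q⁻¹)
            / F (b * t * q⁻¹ * (theta M N q k)⁻¹ * q) := by
      have e0 : qq M q k = q := if_pos hk
      simp [Amat, F, e0, ← hT]
    rw [h1, scaleVar_CFF ht, show sgn M k = 1 from if_pos hk, zpow_one,
      show b * t * q⁻¹ * (theta M N q k)⁻¹ * q⁻¹ * theta M N q k = b * t * q⁻¹ * q⁻¹ by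
        field_simp; try ring,
      show b * t * q⁻¹ * (theta M N q k)⁻¹ * q * theta M N q k = b * t by field_simp; try ring]
  · have h1 : (Amat M N q k b).1 k
        = Cc q⁻¹ * F (b * t * q⁻¹ * (theta M N q k)⁻¹ * q⁻¹⁻¹)
            / F (b * t * q⁻¹ * (theta M N q k)⁻¹ * q⁻¹) := by
      have e0 : qq M q k = q⁻¹ := if_neg hk
      simp [Amat, F, e0, ← hT]
    rw [h1, scaleVar_CFF ht, show sgn M k = -1 from if_neg hk, zpow_neg, zpow_one,
      show b * t * q⁻¹ * (theta M N q k)⁻¹ * q⁻¹⁻¹ * theta M N q k = b * t by field_simp; try ring,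
      show b * t * q⁻¹ * (theta M N q k)⁻¹ * q⁻¹ * theta M N q k = b * t * q⁻¹ * q⁻¹ by
        field_simp; try ring,
      key_inv (inv_ne_zero hq), inv_inv]

lemma Amat_term2 {M N : ℕ} {q : ℂ} (hq : q ≠ 0) (k : ℕ) (b : ℂ) :
    scaleVar (theta M N q (k + 1)) ((Amat M N q k b).1 (k + 1)) ^ sgn M (k + 1)
      = Cc q⁻¹ * F (b * tau M N q k) / F (b * tau M N q k * q⁻¹ * q⁻¹) := by
  have ht : theta M N q k ≠ 0 := theta_ne hq k
  have ht1 : theta M N q (k + 1) ≠ 0 := theta_ne hq (k + 1)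
  have hkk : k + 1 ≠ k := by omega
  set t := tau M N q k with hT
  clear_value t
  rcases lt_trichotomy k M with hk | hk | hk
  · -- k < M, so k + 1 ≤ M
    have h1 : (Amat M N q k b).1 (k + 1)
        = Cc q⁻¹ * F (b * t * q⁻¹ * (theta M N q k)⁻¹ * q * q ^ 2)
            / F (b * t * q⁻¹ * (theta M N q k)⁻¹ * q) := by
      have e0 : qq M q k = q := if_pos hk.le
      have e1 : qq M q (k + 1) = q := if_pos (by omega)
      simp [Amat, F, hkk, e0, e1, Cc_inv, ← hT]
    rw [h1, scaleVar_CFF ht1, show sgn M (k + 1) = 1 from if_pos (by omega), zpow_one,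
      theta_succ_lt hq hk,
      show b * t * q⁻¹ * (theta M N q k)⁻¹ * q * q ^ 2 * (theta M N q k * (q ^ 2)⁻¹)
          = b * t by field_simp; try ring,
      show b * t * q⁻¹ * (theta M N q k)⁻¹ * q * (theta M N q k * (q ^ 2)⁻¹)
          = b * t * q⁻¹ * q⁻¹ by field_simp; try ring]
  · -- k = M
    have hth : theta M N q (k + 1) = theta M N q k := by rw [hk]; exact theta_succ_M hq
    have h1 : (Amat M N q k b).1 (k + 1)
        = Cc q⁻¹⁻¹ * F (b * t * q⁻¹ * (theta M N q k)⁻¹ * q * (q⁻¹) ^ 2)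
            / F (b * t * q⁻¹ * (theta M N q k)⁻¹ * q) := by
      have e0 : qq M q k = q := if_pos hk.le
      have e1 : qq M q (k + 1) = q⁻¹ := if_neg (by omega)
      simp [Amat, F, hkk, e0, e1, Cc_inv, ← hT]
    rw [h1, inv_inv, scaleVar_CFF ht1, show sgn M (k + 1) = -1 from if_neg (by omega),
      zpow_neg, zpow_one, hth,
      show b * t * q⁻¹ * (theta M N q k)⁻¹ * q * (q⁻¹) ^ 2 * theta M N q k
          = b * t * q⁻¹ * q⁻¹ by field_simp; try ring,
      show b * t * q⁻¹ * (theta M N q k)⁻¹ * q * theta M N q k = b * t by field_simp; try ring,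
      key_inv hq]
  · -- M < k
    have h1 : (Amat M N q k b).1 (k + 1)
        = Cc q⁻¹⁻¹ * F (b * t * q⁻¹ * (theta M N q k)⁻¹ * q⁻¹ * (q⁻¹) ^ 2)
            / F (b * t * q⁻¹ * (theta M N q k)⁻¹ * q⁻¹) := by
      have e0 : qq M q k = q⁻¹ := if_neg (by omega)
      have e1 : qq M q (k + 1) = q⁻¹ := if_neg (by omega)
      simp [Amat, F, hkk, e0, e1, Cc_inv, ← hT]
    rw [h1, inv_inv, scaleVar_CFF ht1, show sgn M (k + 1) = -1 from if_neg (by omega),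
      zpow_neg, zpow_one, theta_succ_gt hq hk,
      show b * t * q⁻¹ * (theta M N q k)⁻¹ * q⁻¹ * (q⁻¹) ^ 2 * (theta M N q k * q ^ 2)
          = b * t * q⁻¹ * q⁻¹ by field_simp; try ring,
      show b * t * q⁻¹ * (theta M N q k)⁻¹ * q⁻¹ * (theta M N q k * q ^ 2) = b * t by
        field_simp,
      key_inv hq]


lemma prod_pair_ite (s : Finset ℕ) (k : ℕ) (X Y : RatFunc ℂ) :
    (∏ j ∈ s, if j = k then X else if j = k + 1 then Y else 1)
      = (if k ∈ s then X else 1) * (if k + 1 ∈ s then Y else 1) := by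
  rw [← Finset.prod_ite_eq' s k (fun _ => X), ← Finset.prod_ite_eq' s (k + 1) (fun _ => Y),
    ← Finset.prod_mul_distrib]
  apply Finset.prod_congr rfl
  intro j hj
  by_cases h1 : j = k
  · simp [h1, (by omega : k ≠ k + 1)]
  · by_cases h2 : j = k + 1 <;> simp [h1, h2]

lemma CFun_mul {M N : ℕ} {q : ℂ} (hq : q ≠ 0) (i : ℕ) (f g : LW) :
    CFun M N q i (f * g) = CFun M N q i f * CFun M N q i g := by
  unfold CFun
  rw [← Finset.prod_mul_distrib]
  apply Finset.prod_congr rfl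
  intro j hj
  rw [show (f * g).1 j = f.1 j * g.1 j from rfl, scaleVar_mul (theta_ne hq j), mul_zpow]

lemma CFun_inv {M N : ℕ} {q : ℂ} (hq : q ≠ 0) (i : ℕ) (f : LW) :
    CFun M N q i f⁻¹ = (CFun M N q i f)⁻¹ := by
  unfold CFun
  rw [← Finset.prod_inv_distrib]
  apply Finset.prod_congr rfl
  intro j hj
  rw [show (f⁻¹).1 j = (f.1 j)⁻¹ from rfl, scaleVar_inv (theta_ne hq j), inv_zpow]

lemma CFun_box {M N : ℕ} {q : ℂ} (hq : q ≠ 0) (i l : ℕ) (hl' : l ≤ M + N) (a : ℂ) :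
    CFun M N q i (box M N q l a)
      = if i ≤ l then Cc q * F (a * q⁻¹) / F (a * q) else 1 := by
  unfold CFun
  have step : ∀ j ∈ Finset.Icc i (M + N),
      scaleVar (theta M N q j) ((box M N q l a).1 j) ^ sgn M j
        = if j = l then Cc q * F (a * q⁻¹) / F (a * q) else 1 := by
    intro j hj
    by_cases h : j = l
    · subst h
      rw [if_pos rfl, box_term hq]
    · rw [if_neg h, show (box M N q l a).1 j = 1 by simp [box, h],
        scaleVar_one (theta_ne hq j), one_zpow]
  rw [Finset.prod_congr rfl step, Finset.prod_ite_eq' (Finset.Icc i (M + N)) l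
    (fun _ => Cc q * F (a * q⁻¹) / F (a * q))]
  simp only [Finset.mem_Icc]
  by_cases h : i ≤ l
  · rw [if_pos ⟨h, hl'⟩, if_pos h]
  · rw [if_neg (by omega), if_neg h]

lemma CFun_Amat {M N : ℕ} {q : ℂ} (hq : q ≠ 0) (i k : ℕ) (hk' : k + 1 ≤ M + N) (b : ℂ) :
    CFun M N q i (Amat M N q k b)
      = if i ≤ k then 1
        else if i = k + 1 then
          Cc q⁻¹ * F (b * tau M N q k) / F (b * tau M N q k * q⁻¹ * q⁻¹)
        else 1 := by
  unfold CFun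
  set X := Cc q * F (b * tau M N q k * q⁻¹ * q⁻¹) / F (b * tau M N q k) with hX
  set Y := Cc q⁻¹ * F (b * tau M N q k) / F (b * tau M N q k * q⁻¹ * q⁻¹) with hY
  have step : ∀ j ∈ Finset.Icc i (M + N),
      scaleVar (theta M N q j) ((Amat M N q k b).1 j) ^ sgn M j
        = if j = k then X else if j = k + 1 then Y else 1 := by
    intro j hj
    by_cases h1 : j = k
    · subst h1
      rw [if_pos rfl, Amat_term1 hq]
    · by_cases h2 : j = k + 1
      · subst h2
        rw [if_neg h1, if_pos rfl, Amat_term2 hq]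
      · rw [if_neg h1, if_neg h2, show (Amat M N q k b).1 j = 1 by simp [Amat, h1, h2],
          scaleVar_one (theta_ne hq j), one_zpow]
  rw [Finset.prod_congr rfl step, prod_pair_ite]
  simp only [Finset.mem_Icc]
  have hYX : Y = X⁻¹ := by rw [hX, key_inv hq]
  by_cases h : i ≤ k
  · rw [if_pos ⟨h, by omega⟩, if_pos ⟨by omega, hk'⟩, if_pos h, hYX,
      mul_inv_cancel₀ (key_ne hq)]
  · by_cases h2 : i = k + 1
    · rw [if_neg (by omega), if_pos ⟨by omega, hk'⟩, if_neg h, if_pos h2, one_mul]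
    · rw [if_neg (by omega), if_neg (by omega), if_neg h, if_neg h2, one_mul]

lemma CFun_boxStar {M N : ℕ} {q : ℂ} (hq : q ≠ 0) (l : ℕ) :
    1 ≤ l → l ≤ M + N → ∀ (a : ℂ) (i : ℕ), 1 ≤ i →
    CFun M N q i (boxStar M N q l a)
      = if i ≤ l then
          Cc q⁻¹ * F (a * tSmall M N q i * q) / F (a * tSmall M N q i * q⁻¹)
        else 1 := by
  induction l with
  | zero => omega
  | succ j ih =>
    match j, ih with
    | 0, _ =>
      intro _ _ a i hi
      rw [show boxStar M N q 1 a = (box M N q 1 (a * theta M N q 1))⁻¹ from rfl,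
        CFun_inv hq, CFun_box hq i 1 (by omega)]
      by_cases h : i ≤ 1
      · have hi1 : i = 1 := by omega
        have ht : tSmall M N q i = theta M N q 1 := by
          rw [hi1]
          simp [tSmall]
        rw [if_pos h, if_pos h, key_inv hq, ht, mul_assoc, mul_assoc]
      · rw [if_neg h, if_neg h, inv_one]
    | j' + 1, ih =>
      intro hl hl' a i hi
      have hstep : boxStar M N q (j' + 1 + 1) a
          = boxStar M N q (j' + 1) a
              * Amat M N q (j' + 1) (a * tau M N q (j' + 1) * q⁻¹) := rfl
      rw [hstep, CFun_mul hq, ih (by omega) (by omega) a i hi,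
        CFun_Amat hq i (j' + 1) (by omega)]
      set k := j' + 1 with hk
      by_cases h1 : i ≤ k
      · rw [if_pos h1, if_pos h1, if_pos (by omega), mul_one]
      · by_cases h2 : i = k + 1
        · have hts : tSmall M N q (k + 1) = tau M N q k ^ 2 * (q ^ 2)⁻¹ := by
            simp [tSmall, hk]
          have ht : a * tau M N q k * q⁻¹ * tau M N q k = a * tSmall M N q i * q := by
            rw [h2, hts]
            field_simp
          have ht2 : a * tau M N q k * q⁻¹ * tau M N q k * q⁻¹ * q⁻¹
              = a * tSmall M N q i * q⁻¹ := by
            rw [h2, hts]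
            field_simp
          rw [if_neg h1, if_neg h1, if_pos h2, if_pos (by omega), one_mul, ht2, ht]
        · rw [if_neg h1, if_neg h1, if_neg h2, if_neg (by omega), one_mul]


/-- the spectra of `C_i(z)` on the ℓ-weights `⬜l_a` and `⬜l*_a`. -/
theorem statement5 (M N : ℕ) (hM : 1 ≤ M) (hN : 1 ≤ N) (q : ℂ) (hq : q ≠ 0)
    (hroot : ∀ n : ℕ, 0 < n → q ^ n ≠ 1) (i l : ℕ) (hi : 1 ≤ i) (hi' : i ≤ M + N)
    (hl : 1 ≤ l) (hl' : l ≤ M + N) (a : ℂ) (ha : a ≠ 0) :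
    CFun M N q i (box M N q l a) =
      (if i ≤ l then Cc q * (1 - Cc (a * q⁻¹) * Z) / (1 - Cc (a * q) * Z) else 1) ∧
    CFun M N q i (boxStar M N q l a) =
      (if i ≤ l then
        Cc q⁻¹ * (1 - Cc (a * tSmall M N q i * q) * Z) /
          (1 - Cc (a * tSmall M N q i * q⁻¹) * Z)
      else 1) := by
  constructor
  · rw [CFun_box hq i l hl' a]
    rfl
  · rw [CFun_boxStar hq l hl hl' a i hi]
    rfl

end QAS
end
end

section
/- For all l ∈ I and a ∈ ℂˣ one has the equality of ℓ-weights ⬜l*_a = ((1−zaq⁻³)(1−zaq)/(1−zaq⁻¹)²) · ⬜l′_a, where the scalar rational function (1−zaq⁻³)(1−zaq)/(1−zaq⁻¹)² is identified with the ℓ-weight all of whose components equal it and whose parity is 0̄. -/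
open scoped Classical

noncomputable section

namespace QAS

/-! ### Auxiliary material for statement 6 -/

namespace S6

lemma zmod2_inv : ∀ x : Multiplicative (ZMod 2), x⁻¹ = x := by decide

lemma zmod2_aab : ∀ x y : ZMod 2, x + (x + y) = y := by decide

lemma zmod2_bab : ∀ x y : ZMod 2, y + (x + y) = x := by decide

section Alg
variable {F : Type*} [Field F] {u x y w : F}

lemma alg1 (hu : u ≠ 0) (hy : y ≠ 0) :
    u⁻¹ * (x / y) * (u * w / y) = w * x / y ^ 2 := by field_simp

lemma alg2 (hu : u ≠ 0) (hy : y ≠ 0) :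
    u * (w / y) * (u⁻¹ * x / y) = w * x / y ^ 2 := by field_simp

lemma alg3 (hu : u ≠ 0) (hw : w ≠ 0) (hy : y ≠ 0) :
    (u * w / y)⁻¹ = u⁻¹ * (y / w) := by field_simp

lemma alg4 (hu : u ≠ 0) (hx : x ≠ 0) (hy : y ≠ 0) :
    (u⁻¹ * x / y)⁻¹ = u * (y / x) := by field_simp

lemma alg5 (hu : u ≠ 0) (hx : x ≠ 0) (hy : y ≠ 0) (hw : w ≠ 0) :
    u⁻¹ * (y / w) * (u⁻¹ * x / y)⁻¹ = (w * x / y ^ 2)⁻¹ := by field_simp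

lemma alg6 (hu : u ≠ 0) (hx : x ≠ 0) (hy : y ≠ 0) (hw : w ≠ 0) :
    u * (y / x) * (u * w / y)⁻¹ = (w * x / y ^ 2)⁻¹ := by field_simp

lemma alg7 (hu : u ≠ 0) (hx : x ≠ 0) (hy : y ≠ 0) (hw : w ≠ 0) :
    w * x / y ^ 2 * (u⁻¹ * (y / w)) = u⁻¹ * (x / y) := by field_simp

lemma alg8 (hu : u ≠ 0) (hx : x ≠ 0) (hy : y ≠ 0) (hw : w ≠ 0) :
    w * x / y ^ 2 * (u * (y / x)) = u * (w / y) := by field_simp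

end Alg

lemma gne (c : ℂ) : (1 : RatFunc ℂ) - Cc c * Z ≠ 0 := by
  have h : (1 - Polynomial.C c * Polynomial.X : Polynomial ℂ) ≠ 0 := by
    intro h
    have := congrArg (fun p => Polynomial.coeff p 0) h
    simp at this
  have e : (1 : RatFunc ℂ) - Cc c * Z
      = algebraMap (Polynomial ℂ) (RatFunc ℂ) (1 - Polynomial.C c * Polynomial.X) := by
    simp [Cc, Z, map_sub, map_mul, RatFunc.algebraMap_C, RatFunc.algebraMap_X]
  rw [e]
  exact RatFunc.algebraMap_ne_zero h

lemma Cc_ne {c : ℂ} (hc : c ≠ 0) : Cc c ≠ 0 := by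
  simpa [Cc] using (map_ne_zero_iff _ (RatFunc.C (K := ℂ)).injective).mpr hc

lemma Cc_inv (c : ℂ) : Cc c⁻¹ = (Cc c)⁻¹ := by
  simp [Cc, map_inv₀]

lemma tau_ne (M N : ℕ) {q : ℂ} (hq : q ≠ 0) (i : ℕ) : tau M N q i ≠ 0 := by
  unfold tau; split_ifs <;> exact zpow_ne_zero _ hq

lemma theta_ne (M N : ℕ) {q : ℂ} (hq : q ≠ 0) (i : ℕ) : theta M N q i ≠ 0 := by
  unfold theta; split_ifs <;> exact zpow_ne_zero _ hq

lemma theta_eq_le (M N : ℕ) {q : ℂ} (hq : q ≠ 0) {i : ℕ} (hi : i ≤ M) :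
    theta M N q i = tau M N q i * tau M N q i := by
  unfold theta tau
  rw [if_pos hi, if_pos hi,
    show 2 * ((M:ℤ) - N + 1 - i) = ((M:ℤ) - N + 1 - i) + ((M:ℤ) - N + 1 - i) by ring,
    zpow_add₀ hq]

lemma theta_eq_gt (M N : ℕ) {q : ℂ} (hq : q ≠ 0) {i : ℕ} (hi : ¬ i ≤ M) :
    theta M N q i = tau M N q i * tau M N q i * (q * q)⁻¹ := by
  unfold theta tau
  rw [if_neg hi, if_neg hi,
    show 2 * ((i:ℤ) - M - N) = (((i:ℤ) - M + 1 - N) + ((i:ℤ) - M + 1 - N)) + (-1 + -1) by ring,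
    zpow_add₀ hq, zpow_add₀ hq, zpow_add₀ hq, zpow_neg_one]
  rw [mul_inv]

lemma theta_top (M N : ℕ) {q : ℂ} (hq : q ≠ 0) (hN : 1 ≤ N) : theta M N q (M + N) = 1 := by
  unfold theta
  rw [if_neg (by omega)]
  rw [show 2 * (((M + N : ℕ) : ℤ) - M - N) = 0 by push_cast; ring, zpow_zero]

lemma qq_le {M : ℕ} (q : ℂ) {i : ℕ} (hi : i ≤ M) : qq M q i = q := if_pos hi

lemma qq_gt {M : ℕ} (q : ℂ) {i : ℕ} (hi : ¬ i ≤ M) : qq M q i = q⁻¹ := if_neg hi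

lemma c1_le (M N : ℕ) {q : ℂ} (hq : q ≠ 0) (a : ℂ) {i : ℕ} (hi : i ≤ M) :
    a * tau M N q i * q⁻¹ * tau M N q i * q⁻¹ * (theta M N q i)⁻¹ * (qq M q i)⁻¹
      = a * (q ^ 3)⁻¹ := by
  rw [theta_eq_le M N hq hi, qq_le q hi]
  have ht := tau_ne M N hq i
  field_simp

lemma c1_gt (M N : ℕ) {q : ℂ} (hq : q ≠ 0) (a : ℂ) {i : ℕ} (hi : ¬ i ≤ M) :
    a * tau M N q i * q⁻¹ * tau M N q i * q⁻¹ * (theta M N q i)⁻¹ * (qq M q i)⁻¹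
      = a * q := by
  rw [theta_eq_gt M N hq hi, qq_gt q hi]
  have ht := tau_ne M N hq i
  field_simp

lemma c2_eq (M N : ℕ) {q : ℂ} (hq : q ≠ 0) (a : ℂ) (i : ℕ) :
    a * tau M N q i * q⁻¹ * tau M N q i * q⁻¹ * (theta M N q i)⁻¹ * qq M q i
      = a * q⁻¹ := by
  have ht := tau_ne M N hq i
  by_cases hi : i ≤ M
  · rw [theta_eq_le M N hq hi, qq_le q hi]; field_simp
  · rw [theta_eq_gt M N hq hi, qq_gt q hi]; field_simp

lemma c3_lt (M N : ℕ) {q : ℂ} (hq : q ≠ 0) (a : ℂ) {i : ℕ} (hi : i + 1 ≤ M) :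
    a * tau M N q i * q⁻¹ * tau M N q i * q⁻¹ * (theta M N q i)⁻¹ * qq M q i
      * qq M q (i + 1) ^ 2 = a * q := by
  have ht := tau_ne M N hq i
  rw [theta_eq_le M N hq (by omega), qq_le q (by omega : i ≤ M), qq_le q hi]
  field_simp

lemma c3_ge (M N : ℕ) {q : ℂ} (hq : q ≠ 0) (a : ℂ) {i : ℕ} (hi : ¬ i + 1 ≤ M) :
    a * tau M N q i * q⁻¹ * tau M N q i * q⁻¹ * (theta M N q i)⁻¹ * qq M q i
      * qq M q (i + 1) ^ 2 = a * (q ^ 3)⁻¹ := by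
  have ht := tau_ne M N hq i
  by_cases h : i ≤ M
  · rw [theta_eq_le M N hq h, qq_le q h, qq_gt q hi]
    field_simp
  · rw [theta_eq_gt M N hq h, qq_gt q h, qq_gt q hi]
    field_simp

/-- the scalar factor -/
def Sc (q a : ℂ) : RatFunc ℂ :=
  (1 - Cc (a * (q ^ 3)⁻¹) * Z) * (1 - Cc (a * q) * Z) / (1 - Cc (a * q⁻¹) * Z) ^ 2

lemma Sc_ne (q a : ℂ) : Sc q a ≠ 0 :=
  div_ne_zero (mul_ne_zero (gne _) (gne _)) (pow_ne_zero _ (gne _))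

/-- closed form of the `l`-th component of `⬜l*_a` -/
def Ecomp (M : ℕ) (q a : ℂ) (l : ℕ) : RatFunc ℂ :=
  if l ≤ M then (Cc q)⁻¹ * ((1 - Cc (a * q) * Z) / (1 - Cc (a * q⁻¹) * Z))
  else Cc q * ((1 - Cc (a * (q ^ 3)⁻¹) * Z) / (1 - Cc (a * q⁻¹) * Z))

/-- closed form of the `l`-th component of `⬜l′_a` -/
def Epcomp (M : ℕ) (q a : ℂ) (l : ℕ) : RatFunc ℂ :=
  if l ≤ M then (Cc q)⁻¹ * ((1 - Cc (a * q⁻¹) * Z) / (1 - Cc (a * (q ^ 3)⁻¹) * Z))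
  else Cc q * ((1 - Cc (a * q⁻¹) * Z) / (1 - Cc (a * q) * Z))

/-- closed form of `⬜l*_a` -/
def starF (M N : ℕ) (q a : ℂ) (l : ℕ) : LW :=
  (fun k => if k = l then Ecomp M q a l else if 1 ≤ k ∧ k < l then Sc q a else 1,
   Multiplicative.ofAdd (par M l))

/-- closed form of `⬜l′_a` -/
def primeF (M N : ℕ) (q a : ℂ) (l : ℕ) : LW :=
  (fun k => if k = l then Epcomp M q a l else if l < k ∧ k ≤ M + N then (Sc q a)⁻¹ else 1,
   Multiplicative.ofAdd (par M l))

lemma starF_step (M N : ℕ) {q : ℂ} (hq : q ≠ 0) (a : ℂ) {i : ℕ} (hi : 1 ≤ i) :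
    starF M N q a i * Amat M N q i (a * tau M N q i * q⁻¹) = starF M N q a (i + 1) := by
  have hCq := Cc_ne hq
  have g1 := gne (a * q⁻¹)
  have g2 := gne (a * q)
  have g3 := gne (a * (q ^ 3)⁻¹)
  unfold starF Amat
  rw [Prod.mk_mul_mk, Prod.mk.injEq]
  constructor
  · funext k
    simp only [Pi.mul_apply]
    by_cases hk : k = i
    · subst hk
      rw [if_pos rfl, if_pos rfl, if_neg (show ¬ k = k + 1 by omega),
        if_pos (show 1 ≤ k ∧ k < k + 1 by omega)]
      by_cases him : k ≤ M
      · rw [c1_le M N hq a him, c2_eq M N hq a k, qq_le q him]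
        unfold Ecomp Sc
        rw [if_pos him]
        exact alg1 hCq g1
      · rw [c1_gt M N hq a him, c2_eq M N hq a k, qq_gt q him]
        unfold Ecomp Sc
        rw [if_neg him, Cc_inv]
        exact alg2 hCq g1
    · by_cases hk' : k = i + 1
      · subst hk'
        rw [if_neg hk, if_neg (show ¬ (1 ≤ i + 1 ∧ i + 1 < i) by omega),
          if_neg hk, if_pos rfl, if_pos rfl, one_mul]
        by_cases him : i + 1 ≤ M
        · rw [c3_lt M N hq a him, c2_eq M N hq a i, qq_le q him]
          unfold Ecomp
          rw [if_pos him, Cc_inv, mul_div_assoc]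
        · rw [c3_ge M N hq a him, c2_eq M N hq a i, qq_gt q him]
          unfold Ecomp
          rw [if_neg him, inv_inv, mul_div_assoc]
      · rw [if_neg hk, if_neg hk, if_neg hk', if_neg hk', mul_one]
        by_cases hr : 1 ≤ k ∧ k < i
        · rw [if_pos hr, if_pos (show 1 ≤ k ∧ k < i + 1 by omega)]
        · rw [if_neg hr, if_neg (show ¬ (1 ≤ k ∧ k < i + 1) by omega)]
  · rw [← ofAdd_add]
    exact congrArg Multiplicative.ofAdd (zmod2_aab _ _)

lemma primeF_step (M N : ℕ) {q : ℂ} (hq : q ≠ 0) (a : ℂ) {i : ℕ} (hi : 1 ≤ i)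
    (hik : i + 1 ≤ M + N) :
    primeF M N q a (i + 1) * (Amat M N q i (a * tau M N q i * q⁻¹))⁻¹
      = primeF M N q a i := by
  have hCq := Cc_ne hq
  have g1 := gne (a * q⁻¹)
  have g2 := gne (a * q)
  have g3 := gne (a * (q ^ 3)⁻¹)
  unfold primeF Amat
  rw [Prod.inv_mk, Prod.mk_mul_mk, Prod.mk.injEq]
  constructor
  · funext k
    simp only [Pi.mul_apply, Pi.inv_apply]
    by_cases hk : k = i
    · subst hk
      rw [if_neg (show ¬ k = k + 1 by omega),
        if_neg (show ¬ (k + 1 < k ∧ k ≤ M + N) by omega), if_pos rfl, if_pos rfl, one_mul]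
      by_cases him : k ≤ M
      · rw [c1_le M N hq a him, c2_eq M N hq a k, qq_le q him]
        unfold Epcomp
        rw [if_pos him]
        exact alg3 hCq g3 g1
      · rw [c1_gt M N hq a him, c2_eq M N hq a k, qq_gt q him]
        unfold Epcomp
        rw [if_neg him, Cc_inv]
        exact alg4 hCq g2 g1
    · by_cases hk' : k = i + 1
      · subst hk'
        rw [if_pos rfl, if_neg hk, if_pos rfl, if_neg hk,
          if_pos (show i < i + 1 ∧ i + 1 ≤ M + N by omega)]
        by_cases him : i + 1 ≤ M
        · rw [c3_lt M N hq a him, c2_eq M N hq a i, qq_le q him]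
          unfold Epcomp Sc
          rw [if_pos him, Cc_inv]
          exact alg5 hCq g2 g1 g3
        · rw [c3_ge M N hq a him, c2_eq M N hq a i, qq_gt q him]
          unfold Epcomp Sc
          rw [if_neg him, inv_inv]
          exact alg6 hCq g2 g1 g3
      · rw [if_neg hk', if_neg hk, if_neg hk', if_neg hk, inv_one, mul_one]
        by_cases hr : i < k ∧ k ≤ M + N
        · rw [if_pos (show i + 1 < k ∧ k ≤ M + N by omega), if_pos hr]
        · by_cases hr2 : i + 1 < k ∧ k ≤ M + N
          · omega
          · rw [if_neg hr2, if_neg hr]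
  · rw [zmod2_inv, ← ofAdd_add]
    exact congrArg Multiplicative.ofAdd (zmod2_bab _ _)

lemma boxStar_one (M N : ℕ) {q : ℂ} (hq : q ≠ 0) (hM : 1 ≤ M) (a : ℂ) :
    boxStar M N q 1 a = starF M N q a 1 := by
  have hCq := Cc_ne hq
  have hθ := theta_ne M N hq 1
  have g1 := gne (a * q⁻¹)
  have g2 := gne (a * q)
  show (box M N q 1 (a * theta M N q 1))⁻¹ = starF M N q a 1
  unfold box starF
  rw [Prod.inv_mk, Prod.mk.injEq]
  constructor
  · funext k
    simp only [Pi.inv_apply]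
    by_cases hk : k = 1
    · subst hk
      rw [if_pos rfl, if_pos rfl, qq_le q hM,
        show a * theta M N q 1 * (theta M N q 1)⁻¹ * q⁻¹ = a * q⁻¹ by field_simp,
        show a * theta M N q 1 * (theta M N q 1)⁻¹ * q = a * q by field_simp]
      unfold Ecomp
      rw [if_pos hM]
      exact alg3 hCq g1 g2
    · rw [if_neg hk, if_neg hk, if_neg (show ¬ (1 ≤ k ∧ k < 1) by omega), inv_one]
  · rw [zmod2_inv]

lemma boxStar_eq (M N : ℕ) {q : ℂ} (hq : q ≠ 0) (hM : 1 ≤ M) (a : ℂ) :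
    ∀ l, 1 ≤ l → boxStar M N q l a = starF M N q a l := by
  intro l hl
  induction l with
  | zero => omega
  | succ n ih =>
    rcases Nat.eq_zero_or_pos n with hn | hn
    · subst hn
      exact boxStar_one M N hq hM a
    · have hrec : boxStar M N q (n + 1) a
          = boxStar M N q n a * Amat M N q n (a * tau M N q n * q⁻¹) := by
        obtain ⟨m, rfl⟩ := Nat.exists_eq_add_of_lt hn
        rfl
      rw [hrec, ih hn]
      exact starF_step M N hq a hn

lemma boxPrimeAux_zero (M N : ℕ) {q : ℂ} (hq : q ≠ 0) (hN : 1 ≤ N) (a : ℂ) :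
    boxPrimeAux M N q a 0 = primeF M N q a (M + N) := by
  have hCq := Cc_ne hq
  have g1 := gne (a * q⁻¹)
  have g2 := gne (a * q)
  have hMN : ¬ M + N ≤ M := by omega
  show (box M N q (M + N) a)⁻¹ = primeF M N q a (M + N)
  unfold box primeF
  rw [Prod.inv_mk, Prod.mk.injEq]
  constructor
  · funext k
    simp only [Pi.inv_apply]
    by_cases hk : k = M + N
    · subst hk
      rw [if_pos rfl, if_pos rfl, qq_gt q hMN, theta_top M N hq hN,
        show a * (1 : ℂ)⁻¹ * q⁻¹⁻¹ = a * q by rw [inv_inv, inv_one, mul_one],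
        show a * (1 : ℂ)⁻¹ * q⁻¹ = a * q⁻¹ by rw [inv_one, mul_one]]
      unfold Epcomp
      rw [if_neg hMN, Cc_inv]
      exact alg4 hCq g2 g1
    · rw [if_neg hk, if_neg hk, if_neg (show ¬ (M + N < k ∧ k ≤ M + N) by omega), inv_one]
  · rw [zmod2_inv]

lemma boxPrimeAux_eq (M N : ℕ) {q : ℂ} (hq : q ≠ 0) (hN : 1 ≤ N) (a : ℂ) :
    ∀ d, d ≤ M + N - 1 → boxPrimeAux M N q a d = primeF M N q a (M + N - d) := by
  intro d
  induction d with
  | zero =>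
    intro _
    simpa using boxPrimeAux_zero M N hq hN a
  | succ d ih =>
    intro hd
    have hrec : boxPrimeAux M N q a (d + 1)
        = boxPrimeAux M N q a d *
          (Amat M N q (M + N - (d + 1)) (a * tau M N q (M + N - (d + 1)) * q⁻¹))⁻¹ := rfl
    rw [hrec, ih (by omega)]
    have h1 : M + N - d = (M + N - (d + 1)) + 1 := by omega
    rw [h1]
    exact primeF_step M N hq a (by omega) (by omega)

lemma assemble (M N : ℕ) {q : ℂ} (hq : q ≠ 0) (a : ℂ) {l : ℕ} (hl : 1 ≤ l)
    (hl' : l ≤ M + N) :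
    scalarLW M N (Sc q a) * primeF M N q a l = starF M N q a l := by
  have hCq := Cc_ne hq
  have g1 := gne (a * q⁻¹)
  have g2 := gne (a * q)
  have g3 := gne (a * (q ^ 3)⁻¹)
  unfold scalarLW primeF starF
  rw [Prod.mk_mul_mk, Prod.mk.injEq]
  constructor
  · funext k
    simp only [Pi.mul_apply]
    by_cases hk : k = l
    · subst hk
      rw [if_pos (show 1 ≤ k ∧ k ≤ M + N by omega), if_pos rfl, if_pos rfl]
      unfold Sc Ecomp Epcomp
      by_cases him : k ≤ M
      · rw [if_pos him, if_pos him]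
        exact alg7 hCq g2 g1 g3
      · rw [if_neg him, if_neg him]
        exact alg8 hCq g2 g1 g3
    · by_cases hr : l < k ∧ k ≤ M + N
      · rw [if_pos (show 1 ≤ k ∧ k ≤ M + N by omega), if_neg hk, if_neg hk, if_pos hr,
          if_neg (show ¬ (1 ≤ k ∧ k < l) by omega)]
        exact mul_inv_cancel₀ (Sc_ne q a)
      · by_cases hs : 1 ≤ k ∧ k < l
        · rw [if_pos (show 1 ≤ k ∧ k ≤ M + N by omega), if_neg hk, if_neg hk, if_neg hr,
            if_pos hs, mul_one]
        · rw [if_neg hk, if_neg hk, if_neg hr, if_neg hs, mul_one,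
            if_neg (show ¬ (1 ≤ k ∧ k ≤ M + N) by omega)]
  · rw [one_mul]

end S6

/-- `⬜l*_a = ((1-zaq⁻³)(1-zaq)/(1-zaq⁻¹)²) · ⬜l′_a`. -/
theorem statement6 (M N : ℕ) (hM : 1 ≤ M) (hN : 1 ≤ N) (q : ℂ) (hq : q ≠ 0)
    (hroot : ∀ n : ℕ, 0 < n → q ^ n ≠ 1) (l : ℕ) (hl : 1 ≤ l) (hl' : l ≤ M + N)
    (a : ℂ) (ha : a ≠ 0) :
    boxStar M N q l a =
      scalarLW M N
        ((1 - Cc (a * (q ^ 3)⁻¹) * Z) * (1 - Cc (a * q) * Z) /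
          (1 - Cc (a * q⁻¹) * Z) ^ 2) *
      boxPrime M N q l a := by
  rw [S6.boxStar_eq M N hq hM a l hl]
  have hp : boxPrime M N q l a = S6.primeF M N q a l := by
    unfold boxPrime
    rw [S6.boxPrimeAux_eq M N hq hN a (M + N - l) (by omega),
      show M + N - (M + N - l) = l by omega]
  rw [hp]
  exact (S6.assemble M N hq a hl hl').symm

end QAS
end
end
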